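/- arXiv:2001.05281 — 7 statements merged into one kernel-verified Lean document; each statement's English description precedes it below -/
import Mathlib

section
/- Assume ∑_{i=0}^d α_i |ẑ|^i > 0. Then the elementwise backward error of ẑ satisfies the explicit formula η_α(ẑ) = |p(ẑ)| / (∑_{i=0}^d α_i |ẑ|^i), and the infimum in its definition is attained. -/
/-!
The triangle inequality gives `‖p(ẑ)‖ = ‖∑ Δpᵢ ẑⁱ‖ ≤ ε ∑ αᵢ |ẑ|ⁱ` for every admissible `ε`.
Conversely, the perturbation `Δpᵢ = -(p(ẑ) / ∑ⱼ αⱼ |ẑ|ʲ) αᵢ conj(ẑⁱ) / |ẑ|ⁱ` aligns every term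
`Δpᵢ ẑⁱ` with `-p(ẑ)`, so it attains the bound.
-/

open Finset

section BackwardError

variable {ι 𝕜 : Type*}

/-- For a polynomial, `P` stands for `p(ẑ)` and `w i` for `ẑ ^ i`. -/
def backwardErrors [NormedRing 𝕜] (s : Finset ι) (P : 𝕜) (w : ι → 𝕜) (α : ι → ℝ) : Set ℝ :=
  {ε | 0 ≤ ε ∧ ∃ Δ : ι → 𝕜, P + ∑ i ∈ s, Δ i * w i = 0 ∧ ∀ i ∈ s, ‖Δ i‖ ≤ ε * α i}

theorem norm_le_mul_sum_of_mem_backwardErrors [NormedRing 𝕜] {s : Finset ι} {P : 𝕜}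
    {w : ι → 𝕜} {α : ι → ℝ} {ε : ℝ} (hε : ε ∈ backwardErrors s P w α) :
    ‖P‖ ≤ ε * ∑ i ∈ s, α i * ‖w i‖ := by
  obtain ⟨-, Δ, hroot, hΔ⟩ := hε
  calc ‖P‖ = ‖∑ i ∈ s, Δ i * w i‖ := by rw [eq_neg_of_add_eq_zero_left hroot, norm_neg]
    _ ≤ ∑ i ∈ s, ‖Δ i‖ * ‖w i‖ := norm_sum_le_of_le s fun i _ => norm_mul_le _ _
    _ ≤ ∑ i ∈ s, ε * α i * ‖w i‖ :=
        sum_le_sum fun i hi => mul_le_mul_of_nonneg_right (hΔ i hi) (norm_nonneg _)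
    _ = ε * ∑ i ∈ s, α i * ‖w i‖ := by simp only [mul_sum, mul_assoc]

theorem RCLike.conj_div_norm_mul_self [RCLike 𝕜] (z : 𝕜) :
    starRingEnd 𝕜 z / ‖z‖ * z = ‖z‖ := by
  rcases eq_or_ne z 0 with rfl | hz
  · simp
  · have hz' : (‖z‖ : 𝕜) ≠ 0 := by exact_mod_cast norm_ne_zero_iff.mpr hz
    rw [div_mul_eq_mul_div, RCLike.conj_mul, pow_two, mul_div_cancel_right₀ _ hz']

theorem RCLike.norm_conj_div_norm_le_one [RCLike 𝕜] (z : 𝕜) :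
    ‖starRingEnd 𝕜 z / ‖z‖‖ ≤ 1 := by
  rw [norm_div, RCLike.norm_conj, RCLike.norm_ofReal, abs_norm]
  exact div_self_le_one _

theorem isLeast_backwardErrors [RCLike 𝕜] {s : Finset ι} (P : 𝕜) (w : ι → 𝕜) {α : ι → ℝ}
    (hα : ∀ i ∈ s, 0 ≤ α i) (hS : 0 < ∑ i ∈ s, α i * ‖w i‖) :
    IsLeast (backwardErrors s P w α) (‖P‖ / ∑ i ∈ s, α i * ‖w i‖) := by
  set S := ∑ i ∈ s, α i * ‖w i‖
  refine ⟨⟨by positivity, fun i => -(P / S) * α i * (starRingEnd 𝕜 (w i) / ‖w i‖), ?_, ?_⟩,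
    fun ε hε => (div_le_iff₀ hS).mpr (norm_le_mul_sum_of_mem_backwardErrors hε)⟩
  · have hS' : (S : 𝕜) ≠ 0 := by exact_mod_cast hS.ne'
    have hScast : (S : 𝕜) = ∑ i ∈ s, (α i : 𝕜) * ‖w i‖ := by
      simp only [S, RCLike.ofReal_sum, RCLike.ofReal_mul]
    simp_rw [mul_assoc, RCLike.conj_div_norm_mul_self, ← mul_sum, ← hScast]
    rw [neg_mul, div_mul_cancel₀ P hS', add_neg_cancel]
  · intro i hi
    rw [norm_mul, norm_mul, norm_neg, norm_div, RCLike.norm_ofReal, RCLike.norm_ofReal,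
      abs_of_pos hS, abs_of_nonneg (hα i hi)]
    exact mul_le_of_le_one_right (mul_nonneg (by positivity) (hα i hi)) (RCLike.norm_conj_div_norm_le_one _)

end BackwardError

theorem elementwise_backward_error_formula_general
    (d : ℕ) (p : ℕ → ℂ) (zh : ℂ)
    (α : ℕ → ℝ) (hα : ∀ i, i ≤ d → 0 ≤ α i)
    (hS : 0 < ∑ i ∈ Finset.range (d + 1), α i * ‖zh‖ ^ i) :
    sInf {ε : ℝ | 0 ≤ ε ∧ ∃ Δp : ℕ → ℂ,
        (∑ i ∈ Finset.range (d + 1), p i * zh ^ i) +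
          (∑ i ∈ Finset.range (d + 1), Δp i * zh ^ i) = 0 ∧
        ∀ i, i ≤ d → ‖Δp i‖ ≤ ε * α i} =
      ‖∑ i ∈ Finset.range (d + 1), p i * zh ^ i‖ /
        (∑ i ∈ Finset.range (d + 1), α i * ‖zh‖ ^ i) ∧
    (‖∑ i ∈ Finset.range (d + 1), p i * zh ^ i‖ /
        (∑ i ∈ Finset.range (d + 1), α i * ‖zh‖ ^ i)) ∈
      {ε : ℝ | 0 ≤ ε ∧ ∃ Δp : ℕ → ℂ,
        (∑ i ∈ Finset.range (d + 1), p i * zh ^ i) +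
          (∑ i ∈ Finset.range (d + 1), Δp i * zh ^ i) = 0 ∧
        ∀ i, i ≤ d → ‖Δp i‖ ≤ ε * α i} := by
  have hmem : ∀ i, i ∈ range (d + 1) ↔ i ≤ d := fun i => by rw [mem_range, Nat.lt_succ_iff]
  have hleast := isLeast_backwardErrors (s := range (d + 1)) (∑ i ∈ range (d + 1), p i * zh ^ i)
    (zh ^ ·) (fun i hi => hα i ((hmem i).mp hi)) (by simpa only [norm_pow] using hS)
  simp only [backwardErrors, norm_pow, hmem] at hleast
  exact ⟨hleast.csInf_eq, hleast.1⟩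

/-- Assume `∑_{i=0}^d α_i |ẑ|^i > 0`. Then the elementwise backward error
`η_α(ẑ) = inf{ε ≥ 0 : ∃ Δp, p(ẑ) + ∑ Δp_i ẑ^i = 0 ∧ |Δp_i| ≤ ε α_i}` satisfies the explicit
formula `η_α(ẑ) = |p(ẑ)| / (∑_{i=0}^d α_i |ẑ|^i)`, and the infimum is attained. -/
theorem elementwise_backward_error_formula
    (d : ℕ) (p : ℕ → ℂ) (hpd : p d ≠ 0) (zh : ℂ)
    (α : ℕ → ℝ) (hα : ∀ i, i ≤ d → 0 ≤ α i)
    (hS : 0 < ∑ i ∈ Finset.range (d + 1), α i * ‖zh‖ ^ i) :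
    sInf {ε : ℝ | 0 ≤ ε ∧ ∃ Δp : ℕ → ℂ,
        (∑ i ∈ Finset.range (d + 1), p i * zh ^ i) +
          (∑ i ∈ Finset.range (d + 1), Δp i * zh ^ i) = 0 ∧
        ∀ i, i ≤ d → ‖Δp i‖ ≤ ε * α i} =
      ‖∑ i ∈ Finset.range (d + 1), p i * zh ^ i‖ /
        (∑ i ∈ Finset.range (d + 1), α i * ‖zh‖ ^ i) ∧
    (‖∑ i ∈ Finset.range (d + 1), p i * zh ^ i‖ /
        (∑ i ∈ Finset.range (d + 1), α i * ‖zh‖ ^ i)) ∈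
      {ε : ℝ | 0 ≤ ε ∧ ∃ Δp : ℕ → ℂ,
        (∑ i ∈ Finset.range (d + 1), p i * zh ^ i) +
          (∑ i ∈ Finset.range (d + 1), Δp i * zh ^ i) = 0 ∧
        ∀ i, i ≤ d → ‖Δp i‖ ≤ ε * α i} :=
  elementwise_backward_error_formula_general d p zh α hα hS
end

section
/- Assume S := ∑_{i=0}^d α_i |ẑ|^i > 0. Then there exist complex perturbations Δp_0, …, Δp_d with |Δp_i| ≤ (|p(ẑ)|/S)·α_i for every i ∈ {0,…,d} and p(ẑ) + ∑_{i=0}^d Δp_i ẑ^i = 0; in particular the lower bound |p(ẑ)|/S for the elementwise backward error η_α(ẑ) is attained. -/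
/-!
Put `u = conj ẑ / |ẑ|`, so that `|u| ≤ 1` and `u ẑ = |ẑ|` (also for `ẑ = 0`, where `u = 0` and
`0 ^ 0 = 1`). The perturbation `Δp_i = -(p(ẑ) / S) α_i u^i` then has `|Δp_i| ≤ (|p(ẑ)| / S) α_i`
and `∑ Δp_i ẑ^i = -(p(ẑ) / S) ∑ α_i |ẑ|^i = -p(ẑ)`.
-/

open ComplexConjugate

namespace RCLike

variable {𝕜 : Type*} [RCLike 𝕜]

lemma conj_div_norm_mul_self_s1 (z : 𝕜) : conj z / (‖z‖ : 𝕜) * z = ‖z‖ := by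
  rcases eq_or_ne z 0 with rfl | hz
  · simp
  · rw [div_mul_eq_mul_div, conj_mul, div_eq_iff (by simpa using hz)]
    ring

lemma norm_conj_div_norm_le_one_s1 (z : 𝕜) : ‖conj z / (‖z‖ : 𝕜)‖ ≤ 1 := by
  rcases eq_or_ne z 0 with rfl | hz
  · simp
  · simp [hz]

theorem exists_sum_mul_pow_eq_and_norm_le (s : Finset ℕ) (α : ℕ → ℝ) (z r : 𝕜)
    (hS : 0 < ∑ i ∈ s, α i * ‖z‖ ^ i) :
    ∃ c : ℕ → 𝕜,
      (∀ i, 0 ≤ α i → ‖c i‖ ≤ ‖r‖ / (∑ i ∈ s, α i * ‖z‖ ^ i) * α i) ∧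
        ∑ i ∈ s, c i * z ^ i = r := by
  set S := ∑ i ∈ s, α i * ‖z‖ ^ i
  set u : 𝕜 := conj z / (‖z‖ : 𝕜)
  refine ⟨fun i => r / (S : 𝕜) * α i * u ^ i, fun i hαi => ?_, ?_⟩
  · calc ‖r / (S : 𝕜) * α i * u ^ i‖ = ‖r‖ / S * α i * ‖u‖ ^ i := by
          rw [norm_mul, norm_mul, norm_div, norm_pow, norm_ofReal, norm_ofReal,
            abs_of_pos hS, abs_of_nonneg hαi]
      _ ≤ ‖r‖ / S * α i * 1 := by
          gcongr
          exact pow_le_one₀ (norm_nonneg u) (norm_conj_div_norm_le_one_s1 z)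
      _ = ‖r‖ / S * α i := mul_one _
  · have hu : ∀ i, u ^ i * z ^ i = (‖z‖ : 𝕜) ^ i := fun i => by
      rw [← mul_pow, conj_div_norm_mul_self_s1]
    calc ∑ i ∈ s, r / (S : 𝕜) * α i * u ^ i * z ^ i
        = r / (S : 𝕜) * ∑ i ∈ s, (α i : 𝕜) * (‖z‖ : 𝕜) ^ i := by
          rw [Finset.mul_sum]
          refine Finset.sum_congr rfl fun i _ => ?_
          rw [mul_assoc _ (u ^ i), hu, mul_assoc]
      _ = r := by
          have hS' : (S : 𝕜) ≠ 0 := ofReal_ne_zero.mpr hS.ne'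
          rw [show ∑ i ∈ s, (α i : 𝕜) * (‖z‖ : 𝕜) ^ i = S by simp [S],
            div_mul_cancel₀ r hS']

end RCLike

theorem elementwise_backward_error_attained_general
    (d : ℕ) (p : ℕ → ℂ) (zh : ℂ)
    (α : ℕ → ℝ) (hα : ∀ i, i ≤ d → 0 ≤ α i)
    (hS : 0 < ∑ i ∈ Finset.range (d + 1), α i * ‖zh‖ ^ i) :
    ∃ Δp : ℕ → ℂ,
      (∀ i, i ≤ d → ‖Δp i‖ ≤
        (‖∑ i ∈ Finset.range (d + 1), p i * zh ^ i‖ /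
          (∑ i ∈ Finset.range (d + 1), α i * ‖zh‖ ^ i)) * α i) ∧
      (∑ i ∈ Finset.range (d + 1), p i * zh ^ i) +
        (∑ i ∈ Finset.range (d + 1), Δp i * zh ^ i) = 0 := by
  obtain ⟨Δp, hbound, hsum⟩ := RCLike.exists_sum_mul_pow_eq_and_norm_le (Finset.range (d + 1)) α
    zh (-∑ i ∈ Finset.range (d + 1), p i * zh ^ i) hS
  refine ⟨Δp, fun i hi => ?_, by rw [hsum, add_neg_cancel]⟩
  simpa only [norm_neg] using hbound i (hα i hi)

/-- Assume `S := ∑_{i=0}^d α_i |ẑ|^i > 0`. Then there exist complex perturbations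
`Δp_0, …, Δp_d` with `|Δp_i| ≤ (|p(ẑ)|/S)·α_i` for every `i ∈ {0,…,d}` and
`p(ẑ) + ∑_{i=0}^d Δp_i ẑ^i = 0`; in particular the lower bound `|p(ẑ)|/S` for the
elementwise backward error `η_α(ẑ)` is attained. -/
theorem elementwise_backward_error_attained
    (d : ℕ) (p : ℕ → ℂ) (hpd : p d ≠ 0) (zh : ℂ)
    (α : ℕ → ℝ) (hα : ∀ i, i ≤ d → 0 ≤ α i)
    (hS : 0 < ∑ i ∈ Finset.range (d + 1), α i * ‖zh‖ ^ i) :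
    ∃ Δp : ℕ → ℂ,
      (∀ i, i ≤ d → ‖Δp i‖ ≤
        (‖∑ i ∈ Finset.range (d + 1), p i * zh ^ i‖ /
          (∑ i ∈ Finset.range (d + 1), α i * ‖zh‖ ^ i)) * α i) ∧
      (∑ i ∈ Finset.range (d + 1), p i * zh ^ i) +
        (∑ i ∈ Finset.range (d + 1), Δp i * zh ^ i) = 0 :=
  elementwise_backward_error_attained_general d p zh α hα hS
end

section
/- Let 1 ≤ ℓ ≤ t and let i satisfy k_{ℓ−1} ≤ i ≤ k_ℓ and p_i ≠ 0. Then for every x > 0, (max_{0≤j≤d} |p_j| x^j)/(|p_i| x^i) ≥ (max_{0≤j≤d} |p_j| τ_ℓ^j)/(|p_i| τ_ℓ^i), and consequently γ_i := inf_{x>0} (max_{0≤j≤d} |p_j| x^j)/(|p_i| x^i) is attained at x = τ_ℓ and equals |p_{k_{ℓ−1}}| τ_ℓ^{k_{ℓ−1}} / (|p_i| τ_ℓ^i) = |p_{k_ℓ}| τ_ℓ^{k_ℓ} / (|p_i| τ_ℓ^i). -/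
/-!
At `σ = τ_ℓ` the monomials `|p_{k_{ℓ-1}}| x^{k_{ℓ-1}}` and `|p_{k_ℓ}| x^{k_ℓ}` balance, and the
Newton polygon conditions make them maximal among all `|p_j| σ^j`. So the maximum at `σ` is attained
at a degree `≤ i` and at a degree `≥ i`. For `x ≤ σ` the first of these monomials, divided by
`x^i`, is already at least its value at `σ`, and for `x ≥ σ` the second one is.
-/

open Finset

section Monomials

variable {R : Type*} [CommSemiring R] [LinearOrder R] [IsStrictOrderedRing R]

theorem pow_mul_pow_le_pow_mul_pow {x y : R} {m n : ℕ} (hx : 0 ≤ x) (hxy : x ≤ y)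
    (hmn : m ≤ n) : y ^ m * x ^ n ≤ x ^ m * y ^ n := by
  obtain ⟨e, rfl⟩ := Nat.exists_eq_add_of_le hmn
  have hy : 0 ≤ y := hx.trans hxy
  calc y ^ m * x ^ (m + e) = x ^ m * y ^ m * x ^ e := by ring
    _ ≤ x ^ m * y ^ m * y ^ e := by gcongr
    _ = x ^ m * y ^ (m + e) := by ring

theorem mul_pow_le_mul_pow_of_le_left {a b x y : R} {m n : ℕ} (ha : 0 ≤ a) (hy : 0 < y)
    (hyx : y ≤ x) (hmn : m ≤ n) (h : a * y ^ m ≤ b * y ^ n) : a * x ^ m ≤ b * x ^ n := by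
  refine le_of_mul_le_mul_right ?_ (pow_pos hy n)
  calc a * x ^ m * y ^ n = a * (x ^ m * y ^ n) := by ring
    _ ≤ a * (y ^ m * x ^ n) :=
      mul_le_mul_of_nonneg_left (pow_mul_pow_le_pow_mul_pow hy.le hyx hmn) ha
    _ = a * y ^ m * x ^ n := by ring
    _ ≤ b * y ^ n * x ^ n := mul_le_mul_of_nonneg_right h (pow_nonneg (hy.le.trans hyx) n)
    _ = b * x ^ n * y ^ n := by ring

theorem mul_pow_le_mul_pow_of_le_right {a b x y : R} {m n : ℕ} (hb : 0 ≤ b) (hy : 0 < y)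
    (hx : 0 ≤ x) (hxy : x ≤ y) (hmn : m ≤ n) (h : b * y ^ n ≤ a * y ^ m) :
    b * x ^ n ≤ a * x ^ m := by
  refine le_of_mul_le_mul_right ?_ (pow_pos hy m)
  calc b * x ^ n * y ^ m = b * (y ^ m * x ^ n) := by ring
    _ ≤ b * (x ^ m * y ^ n) := mul_le_mul_of_nonneg_left (pow_mul_pow_le_pow_mul_pow hx hxy hmn) hb
    _ = b * y ^ n * x ^ m := by ring
    _ ≤ a * y ^ m * x ^ m := mul_le_mul_of_nonneg_right h (pow_nonneg hx m)
    _ = a * x ^ m * y ^ m := by ring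

end Monomials

theorem mul_pow_eq_mul_pow_of_eq_rpow {A B y : ℝ} {m n : ℕ} (hA : 0 ≤ A) (hB : 0 < B)
    (hmn : m < n) (hy : y = (A / B) ^ (1 / ((n - m : ℕ) : ℝ))) : A * y ^ m = B * y ^ n := by
  have hpow : y ^ (n - m) = A / B := by
    rw [hy, one_div, Real.rpow_inv_natCast_pow (div_nonneg hA hB.le) (by omega)]
  calc A * y ^ m = B * y ^ (n - m) * y ^ m := by rw [hpow, mul_div_cancel₀ _ hB.ne']
    _ = B * y ^ n := by rw [mul_assoc, ← pow_add, Nat.sub_add_cancel hmn.le]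

theorem Nat.exists_le_and_le_succ {k : ℕ → ℕ} {j : ℕ} (t : ℕ) (h0 : k 0 ≤ j)
    (ht : j ≤ k (t + 1)) : ∃ r ≤ t, k r ≤ j ∧ j ≤ k (r + 1) := by
  induction t with
  | zero => exact ⟨0, le_rfl, h0, ht⟩
  | succ t ih =>
    by_cases hj : j ≤ k (t + 1)
    · obtain ⟨r, hr, hrj⟩ := ih hj
      exact ⟨r, hr.trans t.le_succ, hrj⟩
    · exact ⟨t + 1, le_rfl, (not_le.1 hj).le, ht⟩

section NewtonPolygon

variable {a : ℕ → ℝ} {k : ℕ → ℕ} {τ : ℕ → ℝ} {t s : ℕ}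

/-- Since the tropical roots increase, the vertex values `a (k q) * τ (s + 1) ^ k q` increase up
to `q = s + 1` and decrease after it. -/
theorem vertex_mul_pow_le_of_newtonPolygon (ha : ∀ j, 0 ≤ a j) (hk : ∀ r < t, k r ≤ k (r + 1))
    (hτpos : ∀ r < t, 0 < τ (r + 1)) (hτ : MonotoneOn τ (Set.Icc 1 t))
    (hbal : ∀ r < t, a (k r) * τ (r + 1) ^ k r = a (k (r + 1)) * τ (r + 1) ^ k (r + 1))
    (hhull : ∀ r < t, ∀ j, k r ≤ j → j ≤ k (r + 1) →
      a j * τ (r + 1) ^ j ≤ a (k (r + 1)) * τ (r + 1) ^ k (r + 1))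
    (hs : s < t) {r : ℕ} (hr : r ≤ t) :
    a (k r) * τ (s + 1) ^ k r ≤ a (k (s + 1)) * τ (s + 1) ^ k (s + 1) := by
  set g : ℕ → ℝ := fun q => a (k q) * τ (s + 1) ^ k q
  have hup : MonotoneOn g (Set.Iic (s + 1)) := by
    refine monotoneOn_of_le_add_one Set.ordConnected_Iic fun q _ _ (hq : q + 1 ≤ s + 1) => ?_
    have hqt : q < t := by omega
    exact mul_pow_le_mul_pow_of_le_left (ha _) (hτpos q hqt)
      (hτ ⟨by omega, by omega⟩ ⟨by omega, by omega⟩ hq) (hk q hqt)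
      (hhull q hqt _ le_rfl (hk q hqt))
  have hdown : AntitoneOn g (Set.Icc (s + 1) t) := by
    refine antitoneOn_of_add_one_le Set.ordConnected_Icc fun q _ hq hq1 => ?_
    have hqt : q < t := hq1.2
    have hsq : s + 1 ≤ q := hq.1
    exact mul_pow_le_mul_pow_of_le_right (ha _) (hτpos q hqt) (hτpos s hs).le
      (hτ ⟨by omega, by omega⟩ ⟨by omega, by omega⟩ (by omega)) (hk q hqt) (hbal q hqt).ge
  rcases le_total r (s + 1) with hrs | hsr
  · exact hup hrs (Set.mem_Iic.2 le_rfl) hrs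
  · exact hdown ⟨le_rfl, by omega⟩ ⟨hsr, hr⟩ hsr

/-- On the edge `[k r, k (r + 1)]` containing `j`, the hull condition at `τ (r + 1)` carries over
to `τ (s + 1)` and bounds `a j * τ (s + 1) ^ j` by the value at the endpoint nearer to `s + 1`. -/
theorem mul_pow_le_of_newtonPolygon (ha : ∀ j, 0 ≤ a j) (hk : ∀ r < t, k r ≤ k (r + 1))
    (hτpos : ∀ r < t, 0 < τ (r + 1)) (hτ : MonotoneOn τ (Set.Icc 1 t))
    (hbal : ∀ r < t, a (k r) * τ (r + 1) ^ k r = a (k (r + 1)) * τ (r + 1) ^ k (r + 1))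
    (hhull : ∀ r < t, ∀ j, k r ≤ j → j ≤ k (r + 1) →
      a j * τ (r + 1) ^ j ≤ a (k (r + 1)) * τ (r + 1) ^ k (r + 1))
    (hs : s < t) {j : ℕ} (hj0 : k 0 ≤ j) (hjt : j ≤ k t) :
    a j * τ (s + 1) ^ j ≤ a (k (s + 1)) * τ (s + 1) ^ k (s + 1) := by
  obtain ⟨u, rfl⟩ : ∃ u, t = u + 1 := ⟨t - 1, by omega⟩
  obtain ⟨r, hr, hjr, hjr'⟩ := Nat.exists_le_and_le_succ u hj0 hjt
  have hrt : r < u + 1 := Nat.lt_succ_of_le hr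
  have hvertex := fun q (hq : q ≤ u + 1) =>
    vertex_mul_pow_le_of_newtonPolygon ha hk hτpos hτ hbal hhull hs hq
  have hedge := hhull r hrt j hjr hjr'
  rcases le_or_gt r s with hrs | hsr
  · have hτrσ : τ (r + 1) ≤ τ (s + 1) := hτ ⟨by omega, by omega⟩ ⟨by omega, by omega⟩ (by omega)
    exact (mul_pow_le_mul_pow_of_le_left (ha j) (hτpos r hrt) hτrσ hjr' hedge).trans
      (hvertex (r + 1) (by omega))
  · have hστr : τ (s + 1) ≤ τ (r + 1) := hτ ⟨by omega, by omega⟩ ⟨by omega, by omega⟩ (by omega)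
    exact (mul_pow_le_mul_pow_of_le_right (ha j) (hτpos r hrt) (hτpos s hs).le hστr hjr
      (hedge.trans (hbal r hrt).ge)).trans (hvertex r hrt.le)

end NewtonPolygon

theorem sup'_div_pow_le_sup'_div_pow {s : Finset ℕ} (hs : s.Nonempty) {a : ℕ → ℝ}
    (ha : ∀ j, 0 ≤ a j) {σ x : ℝ} (hσ : 0 < σ) (hx : 0 < x) {m n i : ℕ} (hm : m ∈ s)
    (hn : n ∈ s) (hmi : m ≤ i) (hin : i ≤ n)
    (hFm : s.sup' hs (fun j => a j * σ ^ j) ≤ a m * σ ^ m)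
    (hFn : s.sup' hs (fun j => a j * σ ^ j) ≤ a n * σ ^ n) :
    s.sup' hs (fun j => a j * σ ^ j) / σ ^ i ≤ s.sup' hs (fun j => a j * x ^ j) / x ^ i := by
  rw [div_le_div_iff₀ (pow_pos hσ i) (pow_pos hx i)]
  rcases le_total x σ with hxσ | hσx
  · calc s.sup' hs (fun j => a j * σ ^ j) * x ^ i ≤ a m * (σ ^ m * x ^ i) := by
          rw [← mul_assoc]; gcongr
      _ ≤ a m * (x ^ m * σ ^ i) :=
          mul_le_mul_of_nonneg_left (pow_mul_pow_le_pow_mul_pow hx.le hxσ hmi) (ha m)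
      _ = a m * x ^ m * σ ^ i := by ring
      _ ≤ s.sup' hs (fun j => a j * x ^ j) * σ ^ i :=
          mul_le_mul_of_nonneg_right (le_sup' (fun j => a j * x ^ j) hm) (pow_nonneg hσ.le i)
  · calc s.sup' hs (fun j => a j * σ ^ j) * x ^ i ≤ a n * (x ^ i * σ ^ n) := by
          rw [mul_comm (x ^ i), ← mul_assoc]; gcongr
      _ ≤ a n * (σ ^ i * x ^ n) :=
          mul_le_mul_of_nonneg_left (pow_mul_pow_le_pow_mul_pow hσ.le hσx hin) (ha n)
      _ = a n * x ^ n * σ ^ i := by ring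
      _ ≤ s.sup' hs (fun j => a j * x ^ j) * σ ^ i :=
          mul_le_mul_of_nonneg_right (le_sup' (fun j => a j * x ^ j) hn) (pow_nonneg hσ.le i)

theorem gamma_attained_at_tropical_root_nonzero_coeff_general
    (d t : ℕ) (p : ℕ → ℂ)
    (k : ℕ → ℕ) (hk0 : k 0 = 0) (hkt : k t = d)
    (hkmono : ∀ ℓ, ℓ < t → k ℓ < k (ℓ + 1))
    (hpk : ∀ ℓ, ℓ ≤ t → p (k ℓ) ≠ 0)
    (τ : ℕ → ℝ)
    (hτ : ∀ ℓ, 1 ≤ ℓ → ℓ ≤ t →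
      τ ℓ = (‖p (k (ℓ - 1))‖ / ‖p (k ℓ)‖) ^
            (1 / ((k ℓ - k (ℓ - 1) : ℕ) : ℝ)))
    (hτmono : ∀ ℓ, 1 ≤ ℓ → ℓ < t → τ ℓ < τ (ℓ + 1))
    (hhull : ∀ ℓ, 1 ≤ ℓ → ℓ ≤ t → ∀ j, k (ℓ - 1) ≤ j → j ≤ k ℓ →
      ‖p j‖ * τ ℓ ^ j ≤ ‖p (k ℓ)‖ * τ ℓ ^ (k ℓ))
    (ℓ i : ℕ) (hℓ1 : 1 ≤ ℓ) (hℓt : ℓ ≤ t)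
    (hi1 : k (ℓ - 1) ≤ i) (hi2 : i ≤ k ℓ) :
    (∀ x : ℝ, 0 < x →
      ((Finset.range (d + 1)).sup' Finset.nonempty_range_add_one
          fun j => ‖p j‖ * τ ℓ ^ j) / (‖p i‖ * τ ℓ ^ i) ≤
      ((Finset.range (d + 1)).sup' Finset.nonempty_range_add_one
          fun j => ‖p j‖ * x ^ j) / (‖p i‖ * x ^ i)) ∧
    sInf {y : ℝ | ∃ x : ℝ, 0 < x ∧
        y = ((Finset.range (d + 1)).sup' Finset.nonempty_range_add_one
            fun j => ‖p j‖ * x ^ j) / (‖p i‖ * x ^ i)} =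
      ((Finset.range (d + 1)).sup' Finset.nonempty_range_add_one
          fun j => ‖p j‖ * τ ℓ ^ j) / (‖p i‖ * τ ℓ ^ i) ∧
    ((Finset.range (d + 1)).sup' Finset.nonempty_range_add_one
        fun j => ‖p j‖ * τ ℓ ^ j) / (‖p i‖ * τ ℓ ^ i) =
      ‖p (k (ℓ - 1))‖ * τ ℓ ^ (k (ℓ - 1)) / (‖p i‖ * τ ℓ ^ i) ∧
    ‖p (k (ℓ - 1))‖ * τ ℓ ^ (k (ℓ - 1)) / (‖p i‖ * τ ℓ ^ i) =
      ‖p (k ℓ)‖ * τ ℓ ^ (k ℓ) / (‖p i‖ * τ ℓ ^ i) := by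
  obtain ⟨s, rfl⟩ : ∃ s, ℓ = s + 1 := ⟨ℓ - 1, by omega⟩
  simp only [Nat.add_sub_cancel] at hi1 ⊢
  have hpos : ∀ r ≤ t, 0 < ‖p (k r)‖ := fun r hr => norm_pos_iff.2 (hpk r hr)
  have hτpos : ∀ r < t, 0 < τ (r + 1) := fun r hr => by
    rw [hτ (r + 1) (by omega) hr]
    exact Real.rpow_pos_of_pos (div_pos (hpos _ (by omega)) (hpos _ hr)) _
  have hbal : ∀ r < t, ‖p (k r)‖ * τ (r + 1) ^ k r = ‖p (k (r + 1))‖ * τ (r + 1) ^ k (r + 1) :=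
    fun r hr => mul_pow_eq_mul_pow_of_eq_rpow (norm_nonneg _) (hpos _ hr) (hkmono r hr)
      (by simpa only [Nat.add_sub_cancel] using hτ (r + 1) (by omega) hr)
  have hτ' : MonotoneOn τ (Set.Icc 1 t) :=
    monotoneOn_of_le_add_one Set.ordConnected_Icc fun r _ hr hr1 => (hτmono r hr.1 hr1.2).le
  have hk : MonotoneOn k (Set.Iic t) :=
    monotoneOn_of_le_add_one Set.ordConnected_Iic fun r _ _ hr1 => (hkmono r hr1).le
  have hmax : ∀ j ∈ range (d + 1),
      ‖p j‖ * τ (s + 1) ^ j ≤ ‖p (k (s + 1))‖ * τ (s + 1) ^ k (s + 1) := fun j hj =>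
    mul_pow_le_of_newtonPolygon (fun _ => norm_nonneg _) (fun r hr => (hkmono r hr).le) hτpos hτ'
      hbal (fun r hr => by simpa only [Nat.add_sub_cancel] using hhull (r + 1) (by omega) hr)
      hℓt (by omega) (by rw [hkt]; exact mem_range_succ_iff.1 hj)
  have hmem : ∀ r ≤ t, k r ∈ range (d + 1) := fun r hr =>
    mem_range_succ_iff.2 (hkt ▸ hk (Set.mem_Iic.2 hr) (Set.mem_Iic.2 le_rfl) hr)
  have hF : (range (d + 1)).sup' nonempty_range_add_one (fun j => ‖p j‖ * τ (s + 1) ^ j) =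
      ‖p (k (s + 1))‖ * τ (s + 1) ^ k (s + 1) :=
    le_antisymm (sup'_le _ _ hmax) (le_sup' (fun j => ‖p j‖ * τ (s + 1) ^ j) (hmem _ hℓt))
  have hmin : ∀ x : ℝ, 0 < x → _ := fun x hx => div_le_div_of_nonneg_right
    (sup'_div_pow_le_sup'_div_pow _ (fun _ => norm_nonneg _) (hτpos s hℓt) hx (hmem s (by omega))
      (hmem _ hℓt) hi1 hi2 (hF.trans (hbal s hℓt).symm).le hF.le) (norm_nonneg (p i))
  simp only [div_div, mul_comm _ ‖p i‖] at hmin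
  refine ⟨hmin, IsLeast.csInf_eq ⟨⟨_, hτpos s hℓt, rfl⟩, ?_⟩, by rw [hF, hbal s hℓt],
    by rw [hbal s hℓt]⟩
  rintro _ ⟨x, hx, rfl⟩
  exact hmin x hx

/-- Let `1 ≤ ℓ ≤ t` and let `i` satisfy `k_{ℓ−1} ≤ i ≤ k_ℓ` and `p_i ≠ 0`. Then
for every `x > 0`, `(max_{0≤j≤d} |p_j| x^j)/(|p_i| x^i) ≥ (max_{0≤j≤d} |p_j| τ_ℓ^j)/(|p_i| τ_ℓ^i)`,
and consequently `γ_i := inf_{x>0} (max_{0≤j≤d} |p_j| x^j)/(|p_i| x^i)` is attained at `x = τ_ℓ`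
and equals `|p_{k_{ℓ−1}}| τ_ℓ^{k_{ℓ−1}} / (|p_i| τ_ℓ^i) = |p_{k_ℓ}| τ_ℓ^{k_ℓ} / (|p_i| τ_ℓ^i)`. -/
theorem gamma_attained_at_tropical_root_nonzero_coeff
    (d t : ℕ) (p : ℕ → ℂ) (hp0 : p 0 ≠ 0) (hpd : p d ≠ 0)
    (k : ℕ → ℕ) (hk0 : k 0 = 0) (hkt : k t = d)
    (hkmono : ∀ ℓ, ℓ < t → k ℓ < k (ℓ + 1))
    (hpk : ∀ ℓ, ℓ ≤ t → p (k ℓ) ≠ 0)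
    (τ : ℕ → ℝ)
    (hτ : ∀ ℓ, 1 ≤ ℓ → ℓ ≤ t →
      τ ℓ = (‖p (k (ℓ - 1))‖ / ‖p (k ℓ)‖) ^
            (1 / ((k ℓ - k (ℓ - 1) : ℕ) : ℝ)))
    (hτmono : ∀ ℓ, 1 ≤ ℓ → ℓ < t → τ ℓ < τ (ℓ + 1))
    (hhull : ∀ ℓ, 1 ≤ ℓ → ℓ ≤ t → ∀ j, k (ℓ - 1) ≤ j → j ≤ k ℓ →
      ‖p j‖ * τ ℓ ^ j ≤ ‖p (k ℓ)‖ * τ ℓ ^ (k ℓ))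
    (ℓ i : ℕ) (hℓ1 : 1 ≤ ℓ) (hℓt : ℓ ≤ t)
    (hi1 : k (ℓ - 1) ≤ i) (hi2 : i ≤ k ℓ) (hpi : p i ≠ 0) :
    (∀ x : ℝ, 0 < x →
      ((Finset.range (d + 1)).sup' Finset.nonempty_range_add_one
          fun j => ‖p j‖ * τ ℓ ^ j) / (‖p i‖ * τ ℓ ^ i) ≤
      ((Finset.range (d + 1)).sup' Finset.nonempty_range_add_one
          fun j => ‖p j‖ * x ^ j) / (‖p i‖ * x ^ i)) ∧
    sInf {y : ℝ | ∃ x : ℝ, 0 < x ∧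
        y = ((Finset.range (d + 1)).sup' Finset.nonempty_range_add_one
            fun j => ‖p j‖ * x ^ j) / (‖p i‖ * x ^ i)} =
      ((Finset.range (d + 1)).sup' Finset.nonempty_range_add_one
          fun j => ‖p j‖ * τ ℓ ^ j) / (‖p i‖ * τ ℓ ^ i) ∧
    ((Finset.range (d + 1)).sup' Finset.nonempty_range_add_one
        fun j => ‖p j‖ * τ ℓ ^ j) / (‖p i‖ * τ ℓ ^ i) =
      ‖p (k (ℓ - 1))‖ * τ ℓ ^ (k (ℓ - 1)) / (‖p i‖ * τ ℓ ^ i) ∧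
    ‖p (k (ℓ - 1))‖ * τ ℓ ^ (k (ℓ - 1)) / (‖p i‖ * τ ℓ ^ i) =
      ‖p (k ℓ)‖ * τ ℓ ^ (k ℓ) / (‖p i‖ * τ ℓ ^ i) :=
  gamma_attained_at_tropical_root_nonzero_coeff_general d t p k hk0 hkt hkmono hpk τ hτ hτmono hhull
    ℓ i hℓ1 hℓt hi1 hi2
end

section
/- Let 1 ≤ ℓ ≤ t and let i satisfy k_{ℓ−1} ≤ i ≤ k_ℓ and p_i = 0. Then for every x > 0, (max_{0≤j≤d} |p_j| x^j)/x^i ≥ (max_{0≤j≤d} |p_j| τ_ℓ^j)/τ_ℓ^i, and consequently γ_i := inf_{x>0} (max_{0≤j≤d} |p_j| x^j)/x^i is attained at x = τ_ℓ and equals |p_{k_{ℓ−1}}| τ_ℓ^{k_{ℓ−1}−i} = |p_{k_ℓ}| τ_ℓ^{k_ℓ−i}. -/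
/-!
If a monomial `b x ^ n` dominates `a x ^ j` at some point and `j ≤ n`, it keeps dominating
to the right of that point; if `n ≤ j`, to the left. Applied segment by segment along the
Newton polygon, this shows that at `x = τ_ℓ` the maximum `M(x) = max_j |p_j| x ^ j` is
attained at both vertices `k_{ℓ-1}` and `k_ℓ`, where the two monomials balance. For
`x ≤ τ_ℓ` the vertex `k_{ℓ-1} ≤ i` then gives
`M(x) / x ^ i ≥ |p_{k_{ℓ-1}}| x ^ (k_{ℓ-1} - i) ≥ |p_{k_{ℓ-1}}| τ_ℓ ^ (k_{ℓ-1} - i) = M(τ_ℓ) / τ_ℓ ^ i`,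
and for `x ≥ τ_ℓ` the vertex `k_ℓ ≥ i` gives the same bound.
-/

theorem mul_pow_le_mul_pow_of_le_of_exp_le {a b x y : ℝ} {j n : ℕ} (ha : 0 ≤ a) (hx : 0 < x)
    (hxy : x ≤ y) (hjn : j ≤ n) (h : a * x ^ j ≤ b * x ^ n) : a * y ^ j ≤ b * y ^ n := by
  obtain ⟨z, hz, rfl⟩ : ∃ z, 1 ≤ z ∧ y = x * z :=
    ⟨y / x, (one_le_div hx).2 hxy, by field_simp⟩
  calc a * (x * z) ^ j = a * x ^ j * z ^ j := by ring
    _ ≤ a * x ^ j * z ^ n := by gcongr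
    _ ≤ b * x ^ n * z ^ n := by gcongr
    _ = b * (x * z) ^ n := by ring

theorem mul_pow_le_mul_pow_of_ge_of_exp_ge {a b x y : ℝ} {j n : ℕ} (ha : 0 ≤ a) (hx : 0 < x)
    (hy : 0 ≤ y) (hyx : y ≤ x) (hnj : n ≤ j) (h : a * x ^ j ≤ b * x ^ n) :
    a * y ^ j ≤ b * y ^ n := by
  obtain ⟨z, hz₀, hz₁, rfl⟩ : ∃ z, 0 ≤ z ∧ z ≤ 1 ∧ y = x * z :=
    ⟨y / x, div_nonneg hy hx.le, (div_le_one hx).2 hyx, by field_simp⟩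
  calc a * (x * z) ^ j = a * x ^ j * z ^ j := by ring
    _ ≤ a * x ^ j * z ^ n := by
      gcongr ?_ * ?_
      exact pow_le_pow_of_le_one hz₀ hz₁ hnj
    _ ≤ b * x ^ n * z ^ n := by gcongr
    _ = b * (x * z) ^ n := by ring

theorem mul_pow_eq_mul_pow_of_eq_div_rpow {a b τ : ℝ} {m n : ℕ} (ha : 0 ≤ a) (hb : 0 < b)
    (hmn : m < n) (hτ : τ = (a / b) ^ (1 / ((n - m : ℕ) : ℝ))) : a * τ ^ m = b * τ ^ n := by
  have hpow : τ ^ (n - m) = a / b := by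
    rw [hτ, one_div]
    exact Real.rpow_inv_natCast_pow (by positivity) (by omega)
  rw [← Nat.add_sub_cancel' hmn.le, pow_add, hpow]
  field_simp

noncomputable def tropicalEval (a : ℕ → ℝ) (d : ℕ) (x : ℝ) : ℝ :=
  (Finset.range (d + 1)).sup' Finset.nonempty_range_add_one fun j => a j * x ^ j

theorem le_tropicalEval (a : ℕ → ℝ) {d j : ℕ} (hj : j ≤ d) (x : ℝ) :
    a j * x ^ j ≤ tropicalEval a d x :=
  Finset.le_sup' (fun j => a j * x ^ j) (Finset.mem_range_succ_iff.2 hj)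

theorem tropicalEval_eq_of_forall_le {a : ℕ → ℝ} {d j : ℕ} {x : ℝ} (hj : j ≤ d)
    (h : ∀ i ≤ d, a i * x ^ i ≤ a j * x ^ j) : tropicalEval a d x = a j * x ^ j :=
  le_antisymm (Finset.sup'_le _ _ fun i hi => h i (Finset.mem_range_succ_iff.1 hi))
    (le_tropicalEval a hj x)

theorem tropicalEval_div_pow_le_of_balanced {a : ℕ → ℝ} {d lo hi i : ℕ} {τ x : ℝ}
    (ha : ∀ j, 0 ≤ a j) (hlo : lo ≤ i) (hhi : i ≤ hi) (hd : hi ≤ d) (hτ : 0 < τ)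
    (hbal : a lo * τ ^ lo = a hi * τ ^ hi) (hmax : tropicalEval a d τ = a hi * τ ^ hi)
    (hx : 0 < x) : tropicalEval a d τ / τ ^ i ≤ tropicalEval a d x / x ^ i := by
  rw [hmax]
  have hlo₀ : 0 ≤ a lo := ha lo
  have hhi₀ : 0 ≤ a hi := ha hi
  rcases le_total x τ with hxτ | hτx
  · calc
      a hi * τ ^ hi / τ ^ i = a lo * τ ^ lo / τ ^ i := by rw [hbal]
      _ ≤ a lo * x ^ lo / x ^ i := by
        rw [le_div_iff₀ (by positivity)]
        apply mul_pow_le_mul_pow_of_ge_of_exp_ge (by positivity) hτ hx.le hxτ hlo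
        rw [div_mul_cancel₀ _ (by positivity)]
      _ ≤ tropicalEval a d x / x ^ i := by
        gcongr
        exact le_tropicalEval a (hlo.trans (hhi.trans hd)) x
  · calc
      a hi * τ ^ hi / τ ^ i ≤ a hi * x ^ hi / x ^ i := by
        rw [le_div_iff₀ (by positivity)]
        apply mul_pow_le_mul_pow_of_le_of_exp_le (by positivity) hτ hτx hhi
        rw [div_mul_cancel₀ _ (by positivity)]
      _ ≤ tropicalEval a d x / x ^ i := by
        gcongr
        exact le_tropicalEval a hd x

section NewtonPolygon

variable {a : ℕ → ℝ} {k : ℕ → ℕ} {τ : ℕ → ℝ} {t : ℕ}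

theorem mul_pow_le_right_vertex_of_root_le (ha : ∀ j, 0 ≤ a j) (hk0 : k 0 = 0)
    (hkmono : ∀ m < t, k m ≤ k (m + 1)) (hτpos : ∀ m < t, 0 < τ (m + 1))
    (hτmono : ∀ m, m + 1 < t → τ (m + 1) < τ (m + 2))
    (hhull : ∀ m < t, ∀ j, k m ≤ j → j ≤ k (m + 1) →
      a j * τ (m + 1) ^ j ≤ a (k (m + 1)) * τ (m + 1) ^ k (m + 1))
    {m : ℕ} (hm : m < t) {x : ℝ} (hx : τ (m + 1) ≤ x) {j : ℕ} (hj : j ≤ k (m + 1)) :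
    a j * x ^ j ≤ a (k (m + 1)) * x ^ k (m + 1) := by
  have segment : ∀ m < t, ∀ x, τ (m + 1) ≤ x → ∀ j, k m ≤ j → j ≤ k (m + 1) →
      a j * x ^ j ≤ a (k (m + 1)) * x ^ k (m + 1) := fun m hm x hx j hj₁ hj₂ =>
    mul_pow_le_mul_pow_of_le_of_exp_le (ha j) (hτpos m hm) hx hj₂ (hhull m hm j hj₁ hj₂)
  induction m generalizing x j with
  | zero => exact segment 0 hm x hx j (by rw [hk0]; exact j.zero_le) hj
  | succ m ih =>
    rcases le_or_gt (k (m + 1)) j with hj₁ | hj₁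
    · exact segment (m + 1) hm x hx j hj₁ hj
    · calc a j * x ^ j ≤ a (k (m + 1)) * x ^ k (m + 1) :=
            ih (by omega) ((hτmono m hm).le.trans hx) hj₁.le
        _ ≤ _ := segment (m + 1) hm x hx _ le_rfl (hkmono (m + 1) hm)

theorem mul_pow_le_left_vertex_of_le_root (ha : ∀ j, 0 ≤ a j)
    (hkmono : ∀ m < t, k m ≤ k (m + 1)) (hτmono : ∀ m, m + 1 < t → τ (m + 1) < τ (m + 2))
    (hbal : ∀ m < t, a (k m) * τ (m + 1) ^ k m = a (k (m + 1)) * τ (m + 1) ^ k (m + 1))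
    (hhull : ∀ m < t, ∀ j, k m ≤ j → j ≤ k (m + 1) →
      a j * τ (m + 1) ^ j ≤ a (k (m + 1)) * τ (m + 1) ^ k (m + 1))
    {m : ℕ} (hm : m ≤ t) {x : ℝ} (hx : 0 < x) (hxτ : m < t → x ≤ τ (m + 1)) {j : ℕ}
    (hj₁ : k m ≤ j) (hj₂ : j ≤ k t) : a j * x ^ j ≤ a (k m) * x ^ k m := by
  have segment : ∀ m < t, x ≤ τ (m + 1) → ∀ j, k m ≤ j → j ≤ k (m + 1) →
      a j * x ^ j ≤ a (k m) * x ^ k m := fun m hm hxτ j hj₁ hj₂ =>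
    mul_pow_le_mul_pow_of_ge_of_exp_ge (ha j) (hx.trans_le hxτ) hx.le hxτ hj₁
      ((hhull m hm j hj₁ hj₂).trans_eq (hbal m hm).symm)
  induction hm using Nat.decreasingInduction generalizing j with
  | self => rw [le_antisymm hj₂ hj₁]
  | of_succ m hm ih =>
    rcases le_or_gt j (k (m + 1)) with hj | hj
    · exact segment m hm (hxτ hm) j hj₁ hj
    · calc a j * x ^ j ≤ a (k (m + 1)) * x ^ k (m + 1) :=
            ih (fun h => (hxτ hm).trans (hτmono m h).le) hj.le hj₂
        _ ≤ a (k m) * x ^ k m := segment m hm (hxτ hm) _ (hkmono m hm) le_rfl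

theorem le_last_of_le_succ (hkmono : ∀ m < t, k m ≤ k (m + 1)) {m : ℕ} (hm : m ≤ t) :
    k m ≤ k t :=
  Nat.decreasingInduction (fun m hm ih => (hkmono m hm).trans ih) le_rfl hm

theorem tropicalEval_eq_right_vertex_at_root (ha : ∀ j, 0 ≤ a j) (hk0 : k 0 = 0)
    (hkmono : ∀ m < t, k m ≤ k (m + 1)) (hτpos : ∀ m < t, 0 < τ (m + 1))
    (hτmono : ∀ m, m + 1 < t → τ (m + 1) < τ (m + 2))
    (hbal : ∀ m < t, a (k m) * τ (m + 1) ^ k m = a (k (m + 1)) * τ (m + 1) ^ k (m + 1))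
    (hhull : ∀ m < t, ∀ j, k m ≤ j → j ≤ k (m + 1) →
      a j * τ (m + 1) ^ j ≤ a (k (m + 1)) * τ (m + 1) ^ k (m + 1))
    {m : ℕ} (hm : m < t) :
    tropicalEval a (k t) (τ (m + 1)) = a (k (m + 1)) * τ (m + 1) ^ k (m + 1) := by
  refine tropicalEval_eq_of_forall_le (le_last_of_le_succ hkmono hm) fun j hj => ?_
  rcases le_total j (k (m + 1)) with hj' | hj'
  · exact mul_pow_le_right_vertex_of_root_le ha hk0 hkmono hτpos hτmono hhull hm le_rfl hj'
  · exact mul_pow_le_left_vertex_of_le_root ha hkmono hτmono hbal hhull hm (hτpos m hm)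
      (fun h => (hτmono m h).le) hj' hj

end NewtonPolygon

theorem gamma_attained_at_tropical_root_zero_coeff_general
    (d t : ℕ) (p : ℕ → ℂ)
    (k : ℕ → ℕ) (hk0 : k 0 = 0) (hkt : k t = d)
    (hkmono : ∀ ℓ, ℓ < t → k ℓ < k (ℓ + 1))
    (hpk : ∀ ℓ, ℓ ≤ t → p (k ℓ) ≠ 0)
    (τ : ℕ → ℝ)
    (hτ : ∀ ℓ, 1 ≤ ℓ → ℓ ≤ t →
      τ ℓ = (‖p (k (ℓ - 1))‖ / ‖p (k ℓ)‖) ^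
            (1 / ((k ℓ - k (ℓ - 1) : ℕ) : ℝ)))
    (hτmono : ∀ ℓ, 1 ≤ ℓ → ℓ < t → τ ℓ < τ (ℓ + 1))
    (hhull : ∀ ℓ, 1 ≤ ℓ → ℓ ≤ t → ∀ j, k (ℓ - 1) ≤ j → j ≤ k ℓ →
      ‖p j‖ * τ ℓ ^ j ≤ ‖p (k ℓ)‖ * τ ℓ ^ (k ℓ))
    (ℓ i : ℕ) (hℓ1 : 1 ≤ ℓ) (hℓt : ℓ ≤ t)
    (hi1 : k (ℓ - 1) ≤ i) (hi2 : i ≤ k ℓ) :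
    (∀ x : ℝ, 0 < x →
      ((Finset.range (d + 1)).sup' Finset.nonempty_range_add_one
          fun j => ‖p j‖ * τ ℓ ^ j) / τ ℓ ^ i ≤
      ((Finset.range (d + 1)).sup' Finset.nonempty_range_add_one
          fun j => ‖p j‖ * x ^ j) / x ^ i) ∧
    sInf {y : ℝ | ∃ x : ℝ, 0 < x ∧
        y = ((Finset.range (d + 1)).sup' Finset.nonempty_range_add_one
            fun j => ‖p j‖ * x ^ j) / x ^ i} =
      ((Finset.range (d + 1)).sup' Finset.nonempty_range_add_one
          fun j => ‖p j‖ * τ ℓ ^ j) / τ ℓ ^ i ∧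
    ((Finset.range (d + 1)).sup' Finset.nonempty_range_add_one
        fun j => ‖p j‖ * τ ℓ ^ j) / τ ℓ ^ i =
      ‖p (k (ℓ - 1))‖ * τ ℓ ^ (k (ℓ - 1)) / τ ℓ ^ i ∧
    ‖p (k (ℓ - 1))‖ * τ ℓ ^ (k (ℓ - 1)) / τ ℓ ^ i =
      ‖p (k ℓ)‖ * τ ℓ ^ (k ℓ) / τ ℓ ^ i := by
  obtain ⟨n, rfl⟩ : ∃ n, ℓ = n + 1 := ⟨ℓ - 1, by omega⟩
  subst hkt
  simp only [Nat.add_sub_cancel] at hi1 ⊢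
  have hn : n < t := hℓt
  have hτpos : ∀ m < t, 0 < τ (m + 1) := fun m hm => by
    rw [hτ (m + 1) (by omega) hm]
    exact Real.rpow_pos_of_pos
      (div_pos (norm_pos_iff.2 (hpk m (by omega))) (norm_pos_iff.2 (hpk _ hm))) _
  have hbal : ∀ m < t, ‖p (k m)‖ * τ (m + 1) ^ k m = ‖p (k (m + 1))‖ * τ (m + 1) ^ k (m + 1) :=
    fun m hm => mul_pow_eq_mul_pow_of_eq_div_rpow (norm_nonneg _) (norm_pos_iff.2 (hpk _ hm))
      (hkmono m hm) (hτ (m + 1) (by omega) hm)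
  have hmax := tropicalEval_eq_right_vertex_at_root (a := (‖p ·‖)) (fun _ => norm_nonneg _) hk0
    (fun m hm => (hkmono m hm).le) hτpos (fun m hm => hτmono (m + 1) (by omega) hm) hbal
    (fun m hm => hhull (m + 1) (by omega) hm) hn
  have hlow : ∀ x : ℝ, 0 < x → tropicalEval (‖p ·‖) (k t) (τ (n + 1)) / τ (n + 1) ^ i ≤
      tropicalEval (‖p ·‖) (k t) x / x ^ i := fun x hx =>
    tropicalEval_div_pow_le_of_balanced (fun _ => norm_nonneg _) hi1 hi2
      (le_last_of_le_succ (fun m hm => (hkmono m hm).le) hn) (hτpos n hn) (hbal n hn)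
      hmax hx
  simp only [tropicalEval] at hmax hlow
  refine ⟨hlow, IsLeast.csInf_eq ⟨⟨τ (n + 1), hτpos n hn, rfl⟩, ?_⟩, by rw [hmax, hbal n hn],
    by rw [hbal n hn]⟩
  rintro y ⟨x, hx, rfl⟩
  exact hlow x hx

/-- Let `1 ≤ ℓ ≤ t` and let `i` satisfy `k_{ℓ−1} ≤ i ≤ k_ℓ` and `p_i = 0`. Then
for every `x > 0`, `(max_{0≤j≤d} |p_j| x^j)/x^i ≥ (max_{0≤j≤d} |p_j| τ_ℓ^j)/τ_ℓ^i`, and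
consequently `γ_i := inf_{x>0} (max_{0≤j≤d} |p_j| x^j)/x^i` is attained at `x = τ_ℓ` and
equals `|p_{k_{ℓ−1}}| τ_ℓ^{k_{ℓ−1}−i} = |p_{k_ℓ}| τ_ℓ^{k_ℓ−i}` (the possibly negative
exponents are written with divisions). -/
theorem gamma_attained_at_tropical_root_zero_coeff
    (d t : ℕ) (p : ℕ → ℂ) (hp0 : p 0 ≠ 0) (hpd : p d ≠ 0)
    (k : ℕ → ℕ) (hk0 : k 0 = 0) (hkt : k t = d)
    (hkmono : ∀ ℓ, ℓ < t → k ℓ < k (ℓ + 1))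
    (hpk : ∀ ℓ, ℓ ≤ t → p (k ℓ) ≠ 0)
    (τ : ℕ → ℝ)
    (hτ : ∀ ℓ, 1 ≤ ℓ → ℓ ≤ t →
      τ ℓ = (‖p (k (ℓ - 1))‖ / ‖p (k ℓ)‖) ^
            (1 / ((k ℓ - k (ℓ - 1) : ℕ) : ℝ)))
    (hτmono : ∀ ℓ, 1 ≤ ℓ → ℓ < t → τ ℓ < τ (ℓ + 1))
    (hhull : ∀ ℓ, 1 ≤ ℓ → ℓ ≤ t → ∀ j, k (ℓ - 1) ≤ j → j ≤ k ℓ →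
      ‖p j‖ * τ ℓ ^ j ≤ ‖p (k ℓ)‖ * τ ℓ ^ (k ℓ))
    (ℓ i : ℕ) (hℓ1 : 1 ≤ ℓ) (hℓt : ℓ ≤ t)
    (hi1 : k (ℓ - 1) ≤ i) (hi2 : i ≤ k ℓ) (hpi : p i = 0) :
    (∀ x : ℝ, 0 < x →
      ((Finset.range (d + 1)).sup' Finset.nonempty_range_add_one
          fun j => ‖p j‖ * τ ℓ ^ j) / τ ℓ ^ i ≤
      ((Finset.range (d + 1)).sup' Finset.nonempty_range_add_one
          fun j => ‖p j‖ * x ^ j) / x ^ i) ∧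
    sInf {y : ℝ | ∃ x : ℝ, 0 < x ∧
        y = ((Finset.range (d + 1)).sup' Finset.nonempty_range_add_one
            fun j => ‖p j‖ * x ^ j) / x ^ i} =
      ((Finset.range (d + 1)).sup' Finset.nonempty_range_add_one
          fun j => ‖p j‖ * τ ℓ ^ j) / τ ℓ ^ i ∧
    ((Finset.range (d + 1)).sup' Finset.nonempty_range_add_one
        fun j => ‖p j‖ * τ ℓ ^ j) / τ ℓ ^ i =
      ‖p (k (ℓ - 1))‖ * τ ℓ ^ (k (ℓ - 1)) / τ ℓ ^ i ∧
    ‖p (k (ℓ - 1))‖ * τ ℓ ^ (k (ℓ - 1)) / τ ℓ ^ i =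
      ‖p (k ℓ)‖ * τ ℓ ^ (k ℓ) / τ ℓ ^ i :=
  gamma_attained_at_tropical_root_zero_coeff_general d t p k hk0 hkt hkmono hpk τ hτ hτmono hhull ℓ
    i hℓ1 hℓt hi1 hi2
end

section
/- On each interval between consecutive tropical roots, the max-times polynomial is given by the monomial of the corresponding Newton-polygon vertex: (a) for 0 < x ≤ τ_1, max_{0≤j≤d} |p_j| x^j = |p_0|; (b) for 1 ≤ ℓ ≤ t−1 and τ_ℓ ≤ x ≤ τ_{ℓ+1}, max_{0≤j≤d} |p_j| x^j = |p_{k_ℓ}| x^{k_ℓ}; (c) for x ≥ τ_t, max_{0≤j≤d} |p_j| x^j = |p_d| x^d. -/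
/-!
On the edge of the Newton polygon joining the vertices `k i` and `k (i + 1)`, the two vertex
monomials `|p_{k i}| x^{k i}` and `|p_{k (i+1)}| x^{k (i+1)}` are equal at the tropical root
`x = τ_{i+1}` and dominate every monomial in between. Rescaling `x` away from the root favours
the higher degree for `x ≥ τ_{i+1}` and the lower one for `x ≤ τ_{i+1}`. Since the roots
increase, for `τ_ℓ ≤ x ≤ τ_{ℓ+1}` the vertex monomials increase along the edges before `ℓ` and
decrease along the edges after it, so `|p_{k ℓ}| x^{k ℓ}` dominates every monomial.
-/

open Finset

theorem mul_pow_le_mul_pow_of_base_le {a b τ x : ℝ} {j K : ℕ} (hb : 0 ≤ b) (hτ : 0 < τ)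
    (hjK : j ≤ K) (hx : τ ≤ x) (h : a * τ ^ j ≤ b * τ ^ K) : a * x ^ j ≤ b * x ^ K := by
  have hr : 1 ≤ x / τ := (one_le_div hτ).2 hx
  have hx_eq : x = τ * (x / τ) := by field_simp
  rw [hx_eq, mul_pow, mul_pow, ← mul_assoc, ← mul_assoc]
  calc a * τ ^ j * (x / τ) ^ j ≤ b * τ ^ K * (x / τ) ^ j :=
        mul_le_mul_of_nonneg_right h (by positivity)
    _ ≤ b * τ ^ K * (x / τ) ^ K :=
        mul_le_mul_of_nonneg_left (pow_le_pow_right₀ hr hjK) (by positivity)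

theorem mul_pow_le_mul_pow_of_le_base {a b τ x : ℝ} {j K : ℕ} (hb : 0 ≤ b) (hτ : 0 < τ)
    (hKj : K ≤ j) (hx₀ : 0 ≤ x) (hx : x ≤ τ) (h : a * τ ^ j ≤ b * τ ^ K) :
    a * x ^ j ≤ b * x ^ K := by
  have hr : x / τ ≤ 1 := (div_le_one hτ).2 hx
  have hx_eq : x = τ * (x / τ) := by field_simp
  rw [hx_eq, mul_pow, mul_pow, ← mul_assoc, ← mul_assoc]
  calc a * τ ^ j * (x / τ) ^ j ≤ b * τ ^ K * (x / τ) ^ j :=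
        mul_le_mul_of_nonneg_right h (by positivity)
    _ ≤ b * τ ^ K * (x / τ) ^ K :=
        mul_le_mul_of_nonneg_left (pow_le_pow_of_le_one (by positivity) hr hKj) (by positivity)

theorem mul_pow_eq_mul_pow_of_eq_rpow_s7 {A B r : ℝ} {K L : ℕ} (hA : 0 ≤ A) (hB : 0 < B)
    (hKL : K < L) (hr : r = (A / B) ^ (1 / ((L - K : ℕ) : ℝ))) : A * r ^ K = B * r ^ L := by
  have hr_pow : r ^ (L - K) = A / B := by
    rw [hr, one_div]
    exact Real.rpow_inv_natCast_pow (div_nonneg hA hB.le) (by omega)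
  rw [← Nat.add_sub_cancel' hKL.le, pow_add, hr_pow]
  field_simp

theorem exists_lt_mem_Icc_succ {α : Type*} [LinearOrder α] {k : ℕ → α} {t : ℕ} {y : α}
    (ht : 0 < t) (h₀ : k 0 ≤ y) (hy : y ≤ k t) : ∃ i < t, y ∈ Set.Icc (k i) (k (i + 1)) := by
  induction t, ht using Nat.le_induction with
  | base => exact ⟨0, one_pos, h₀, hy⟩
  | succ n hn ih =>
    by_cases hyn : y ≤ k n
    · obtain ⟨i, hi, hyi⟩ := ih hyn
      exact ⟨i, by omega, hyi⟩
    · exact ⟨n, n.lt_succ_self, (not_le.1 hyn).le, hy⟩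

theorem strictMonoOn_Icc_of_lt_succ {α : Type*} [Preorder α] {f : ℕ → α} {m n : ℕ}
    (hf : ∀ i, m ≤ i → i < n → f i < f (i + 1)) : StrictMonoOn f (Set.Icc m n) :=
  strictMonoOn_of_lt_succ Set.ordConnected_Icc fun i _ hi hi' => by
    rw [Order.succ_eq_add_one] at hi' ⊢
    exact hf i hi.1 hi'.2

/-- Edge `i < t` of the Newton polygon of the coefficients `a` joins the vertices `k i` and
`k (i + 1)` and has tropical root `τ (i + 1)`. -/
structure IsNewtonPolygon (a : ℕ → ℝ) (k : ℕ → ℕ) (τ : ℕ → ℝ) (t : ℕ) : Prop where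
  nonneg : ∀ j, 0 ≤ a j
  vertex_mono : MonotoneOn k (Set.Icc 0 t)
  root_pos : ∀ ℓ ∈ Set.Icc 1 t, 0 < τ ℓ
  root_mono : MonotoneOn τ (Set.Icc 1 t)
  balance : ∀ i < t, a (k i) * τ (i + 1) ^ k i = a (k (i + 1)) * τ (i + 1) ^ k (i + 1)
  hull : ∀ i < t, ∀ j, k i ≤ j → j ≤ k (i + 1) →
    a j * τ (i + 1) ^ j ≤ a (k (i + 1)) * τ (i + 1) ^ k (i + 1)

namespace IsNewtonPolygon

variable {a : ℕ → ℝ} {k : ℕ → ℕ} {τ : ℕ → ℝ} {t i j ℓ : ℕ} {x : ℝ}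

theorem vertex_le_succ (h : IsNewtonPolygon a k τ t) (hi : i < t) : k i ≤ k (i + 1) :=
  h.vertex_mono ⟨i.zero_le, hi.le⟩ ⟨(i + 1).zero_le, hi⟩ i.le_succ

theorem mul_pow_le_of_root_le (h : IsNewtonPolygon a k τ t) (hi : i < t) (hx : τ (i + 1) ≤ x)
    (hij : k i ≤ j) (hji : j ≤ k (i + 1)) : a j * x ^ j ≤ a (k (i + 1)) * x ^ k (i + 1) :=
  mul_pow_le_mul_pow_of_base_le (h.nonneg _) (h.root_pos _ ⟨by omega, hi⟩) hji hx
    (h.hull i hi j hij hji)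

theorem mul_pow_le_of_le_root (h : IsNewtonPolygon a k τ t) (hi : i < t) (hx₀ : 0 ≤ x)
    (hx : x ≤ τ (i + 1)) (hij : k i ≤ j) (hji : j ≤ k (i + 1)) :
    a j * x ^ j ≤ a (k i) * x ^ k i :=
  mul_pow_le_mul_pow_of_le_base (h.nonneg _) (h.root_pos _ ⟨by omega, hi⟩) hij hx₀ hx
    ((h.hull i hi j hij hji).trans (h.balance i hi).ge)

theorem monotoneOn_vertex_mul_pow (h : IsNewtonPolygon a k τ t) (hℓ : ℓ ≤ t)
    (hx : ∀ i < ℓ, τ (i + 1) ≤ x) :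
    MonotoneOn (fun n => a (k n) * x ^ k n) (Set.Iic ℓ) := by
  refine monotoneOn_of_le_succ Set.ordConnected_Iic fun n _ _ hn => ?_
  rw [Order.succ_eq_add_one, Set.mem_Iic] at hn
  exact h.mul_pow_le_of_root_le (by omega) (hx n hn) le_rfl (h.vertex_le_succ (by omega))

theorem antitoneOn_vertex_mul_pow (h : IsNewtonPolygon a k τ t) (hx₀ : 0 ≤ x)
    (hx : ∀ i, ℓ ≤ i → i < t → x ≤ τ (i + 1)) :
    AntitoneOn (fun n => a (k n) * x ^ k n) (Set.Icc ℓ t) := by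
  refine antitoneOn_of_succ_le Set.ordConnected_Icc fun n _ hn hn' => ?_
  rw [Order.succ_eq_add_one, Set.mem_Icc] at hn'
  rw [Order.succ_eq_add_one]
  exact h.mul_pow_le_of_le_root (by omega) hx₀ (hx n hn.1 (by omega))
    (h.vertex_le_succ (by omega)) le_rfl

theorem mul_pow_le_vertex (h : IsNewtonPolygon a k τ t) (ht : 0 < t) (hℓ : ℓ ≤ t) (hx₀ : 0 ≤ x)
    (hlo : 1 ≤ ℓ → τ ℓ ≤ x) (hhi : ℓ < t → x ≤ τ (ℓ + 1)) (hj₀ : k 0 ≤ j) (hjt : j ≤ k t) :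
    a j * x ^ j ≤ a (k ℓ) * x ^ k ℓ := by
  have root_le : ∀ i < ℓ, τ (i + 1) ≤ x := fun i hi =>
    (h.root_mono ⟨by omega, by omega⟩ ⟨by omega, hℓ⟩ (by omega)).trans (hlo (by omega))
  have le_root : ∀ i, ℓ ≤ i → i < t → x ≤ τ (i + 1) := fun i hi hit =>
    (hhi (by omega)).trans (h.root_mono ⟨by omega, by omega⟩ ⟨by omega, hit⟩ (by omega))
  obtain ⟨i, hit, hij, hji⟩ := exists_lt_mem_Icc_succ ht hj₀ hjt
  rcases lt_or_ge i ℓ with hiℓ | hℓi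
  · calc a j * x ^ j ≤ a (k (i + 1)) * x ^ k (i + 1) :=
          h.mul_pow_le_of_root_le hit (root_le i hiℓ) hij hji
      _ ≤ a (k ℓ) * x ^ k ℓ :=
          h.monotoneOn_vertex_mul_pow hℓ root_le (Set.mem_Iic.2 hiℓ) (Set.mem_Iic.2 le_rfl) hiℓ
  · calc a j * x ^ j ≤ a (k i) * x ^ k i :=
          h.mul_pow_le_of_le_root hit hx₀ (le_root i hℓi hit) hij hji
      _ ≤ a (k ℓ) * x ^ k ℓ :=
          h.antitoneOn_vertex_mul_pow hx₀ le_root ⟨le_rfl, hℓ⟩ ⟨hℓi, hit.le⟩ hℓi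

theorem sup'_mul_pow_eq_vertex (h : IsNewtonPolygon a k τ t) (ht : 0 < t) (hk₀ : k 0 = 0)
    (hℓ : ℓ ≤ t) (hx₀ : 0 ≤ x) (hlo : 1 ≤ ℓ → τ ℓ ≤ x) (hhi : ℓ < t → x ≤ τ (ℓ + 1)) :
    (range (k t + 1)).sup' nonempty_range_add_one (fun j => a j * x ^ j) =
      a (k ℓ) * x ^ k ℓ := by
  refine le_antisymm (sup'_le _ _ fun j hj => ?_) (le_sup' (fun j => a j * x ^ j) ?_)
  · exact h.mul_pow_le_vertex ht hℓ hx₀ hlo hhi (by omega)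
      (Nat.lt_succ_iff.1 (mem_range.1 hj))
  · exact mem_range.2 (Nat.lt_succ_of_le (h.vertex_mono ⟨ℓ.zero_le, hℓ⟩ ⟨t.zero_le, le_rfl⟩ hℓ))

end IsNewtonPolygon

theorem maxtimes_polynomial_piecewise_general
    (d t : ℕ) (ht : 1 ≤ t) (p : ℕ → ℂ)
    (k : ℕ → ℕ) (hk0 : k 0 = 0) (hkt : k t = d)
    (hkmono : ∀ ℓ, ℓ < t → k ℓ < k (ℓ + 1))
    (hpk : ∀ ℓ, ℓ ≤ t → p (k ℓ) ≠ 0)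
    (τ : ℕ → ℝ)
    (hτ : ∀ ℓ, 1 ≤ ℓ → ℓ ≤ t →
      τ ℓ = (‖p (k (ℓ - 1))‖ / ‖p (k ℓ)‖) ^
            (1 / ((k ℓ - k (ℓ - 1) : ℕ) : ℝ)))
    (hτmono : ∀ ℓ, 1 ≤ ℓ → ℓ < t → τ ℓ < τ (ℓ + 1))
    (hhull : ∀ ℓ, 1 ≤ ℓ → ℓ ≤ t → ∀ j, k (ℓ - 1) ≤ j → j ≤ k ℓ →
      ‖p j‖ * τ ℓ ^ j ≤ ‖p (k ℓ)‖ * τ ℓ ^ (k ℓ)) :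
    (∀ x : ℝ, 0 < x → x ≤ τ 1 →
      ((Finset.range (d + 1)).sup' Finset.nonempty_range_add_one
          fun j => ‖p j‖ * x ^ j) = ‖p 0‖) ∧
    (∀ ℓ, 1 ≤ ℓ → ℓ < t → ∀ x : ℝ, τ ℓ ≤ x → x ≤ τ (ℓ + 1) →
      ((Finset.range (d + 1)).sup' Finset.nonempty_range_add_one
          fun j => ‖p j‖ * x ^ j) = ‖p (k ℓ)‖ * x ^ (k ℓ)) ∧
    (∀ x : ℝ, τ t ≤ x →
      ((Finset.range (d + 1)).sup' Finset.nonempty_range_add_one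
          fun j => ‖p j‖ * x ^ j) = ‖p d‖ * x ^ d) := by
  subst hkt
  have hN : IsNewtonPolygon (fun j => ‖p j‖) k τ t :=
    { nonneg := fun _ => norm_nonneg _
      vertex_mono := (strictMonoOn_Icc_of_lt_succ fun i _ hi => hkmono i hi).monotoneOn
      root_pos := fun ℓ ⟨hℓ₁, hℓt⟩ => hτ ℓ hℓ₁ hℓt ▸ Real.rpow_pos_of_pos
        (div_pos (norm_pos_iff.2 (hpk _ (by omega))) (norm_pos_iff.2 (hpk _ hℓt))) _
      root_mono := (strictMonoOn_Icc_of_lt_succ hτmono).monotoneOn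
      balance := fun i hi => mul_pow_eq_mul_pow_of_eq_rpow_s7 (norm_nonneg _)
        (norm_pos_iff.2 (hpk _ hi)) (hkmono i hi) (by simpa using hτ (i + 1) (by omega) hi)
      hull := fun i hi j => by simpa using hhull (i + 1) (by omega) hi j }
  refine ⟨fun x hx hx₁ => ?_, fun ℓ hℓ₁ hℓt x hlo hhi => ?_, fun x hx => ?_⟩
  · simpa [hk0] using hN.sup'_mul_pow_eq_vertex ht hk0 t.zero_le hx.le (by omega) fun _ => hx₁
  · exact hN.sup'_mul_pow_eq_vertex ht hk0 hℓt.le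
      ((hN.root_pos ℓ ⟨hℓ₁, hℓt.le⟩).le.trans hlo)
      (fun _ => hlo) fun _ => hhi
  · exact hN.sup'_mul_pow_eq_vertex ht hk0 le_rfl
      ((hN.root_pos t ⟨ht, le_rfl⟩).le.trans hx)
      (fun _ => hx) fun h => (lt_irrefl t h).elim

/-- On each interval between consecutive tropical roots, the max-times polynomial
is given by the monomial of the corresponding Newton-polygon vertex:
(a) for `0 < x ≤ τ_1`, `max_{0≤j≤d} |p_j| x^j = |p_0|`;
(b) for `1 ≤ ℓ ≤ t−1` and `τ_ℓ ≤ x ≤ τ_{ℓ+1}`, `max_{0≤j≤d} |p_j| x^j = |p_{k_ℓ}| x^{k_ℓ}`;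
(c) for `x ≥ τ_t`, `max_{0≤j≤d} |p_j| x^j = |p_d| x^d`. -/
theorem maxtimes_polynomial_piecewise
    (d t : ℕ) (ht : 1 ≤ t) (p : ℕ → ℂ) (hp0 : p 0 ≠ 0) (hpd : p d ≠ 0)
    (k : ℕ → ℕ) (hk0 : k 0 = 0) (hkt : k t = d)
    (hkmono : ∀ ℓ, ℓ < t → k ℓ < k (ℓ + 1))
    (hpk : ∀ ℓ, ℓ ≤ t → p (k ℓ) ≠ 0)
    (τ : ℕ → ℝ)
    (hτ : ∀ ℓ, 1 ≤ ℓ → ℓ ≤ t →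
      τ ℓ = (‖p (k (ℓ - 1))‖ / ‖p (k ℓ)‖) ^
            (1 / ((k ℓ - k (ℓ - 1) : ℕ) : ℝ)))
    (hτmono : ∀ ℓ, 1 ≤ ℓ → ℓ < t → τ ℓ < τ (ℓ + 1))
    (hhull : ∀ ℓ, 1 ≤ ℓ → ℓ ≤ t → ∀ j, k (ℓ - 1) ≤ j → j ≤ k ℓ →
      ‖p j‖ * τ ℓ ^ j ≤ ‖p (k ℓ)‖ * τ ℓ ^ (k ℓ)) :
    (∀ x : ℝ, 0 < x → x ≤ τ 1 →
      ((Finset.range (d + 1)).sup' Finset.nonempty_range_add_one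
          fun j => ‖p j‖ * x ^ j) = ‖p 0‖) ∧
    (∀ ℓ, 1 ≤ ℓ → ℓ < t → ∀ x : ℝ, τ ℓ ≤ x → x ≤ τ (ℓ + 1) →
      ((Finset.range (d + 1)).sup' Finset.nonempty_range_add_one
          fun j => ‖p j‖ * x ^ j) = ‖p (k ℓ)‖ * x ^ (k ℓ)) ∧
    (∀ x : ℝ, τ t ≤ x →
      ((Finset.range (d + 1)).sup' Finset.nonempty_range_add_one
          fun j => ‖p j‖ * x ^ j) = ‖p d‖ * x ^ d) :=
  maxtimes_polynomial_piecewise_general d t ht p k hk0 hkt hkmono hpk τ hτ hτmono hhull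
end

section
/- Let 1 ≤ ℓ ≤ t and let i satisfy k_{ℓ−1} ≤ i ≤ k_ℓ. Then: (i) for every x with 0 < x ≤ τ_ℓ, (max_{0≤j≤d} |p_j| x^j)/x^i ≥ |p_{k_{ℓ−1}}| τ_ℓ^{k_{ℓ−1}−i}; and (ii) for every x ≥ τ_ℓ, (max_{0≤j≤d} |p_j| x^j)/x^i ≥ |p_{k_ℓ}| τ_ℓ^{k_ℓ−i}. -/
/-! Both bounds come from a single term of the maximum: the index `k (ℓ - 1)` for `x ≤ τ ℓ` and
the index `k ℓ` for `x ≥ τ ℓ`. Dividing by `x ^ i` leaves a power `x ^ (k (ℓ - 1) - i)` with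
nonpositive exponent, resp. `x ^ (k ℓ - i)` with nonnegative exponent, and moving `x` to `τ ℓ`
in the direction of the hypothesis can only decrease it. -/

section PowDivPow

variable {α : Type*} [Semifield α] [LinearOrder α] [IsStrictOrderedRing α]

theorem pow_div_pow_le_pow_div_pow_of_le_of_le {x y : α} {a b : ℕ}
    (hx : 0 < x) (hxy : x ≤ y) (hab : a ≤ b) : y ^ a / y ^ b ≤ x ^ a / x ^ b := by
  have hy : 0 < y := hx.trans_le hxy
  rw [div_eq_inv_mul, ← inv_pow_sub₀ hy.ne' hab, div_eq_inv_mul, ← inv_pow_sub₀ hx.ne' hab]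
  exact pow_le_pow_left₀ (inv_nonneg.2 hy.le) (inv_anti₀ hx hxy) _

theorem pow_div_pow_le_pow_div_pow_of_le_of_ge {x y : α} {a b : ℕ}
    (hx : 0 < x) (hxy : x ≤ y) (hba : b ≤ a) : x ^ a / x ^ b ≤ y ^ a / y ^ b := by
  rw [div_eq_mul_inv, ← pow_sub₀ x hx.ne' hba, div_eq_mul_inv,
    ← pow_sub₀ y (hx.trans_le hxy).ne' hba]
  exact pow_le_pow_left₀ hx.le hxy _

theorem mul_pow_div_pow_le_sup'_div_pow {s : Finset ℕ} (hs : s.Nonempty) {c : ℕ → α}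
    {i j : ℕ} (hj : j ∈ s) (hc : 0 ≤ c j) {x y : α} (hx : 0 < x)
    (hxy : y ^ j / y ^ i ≤ x ^ j / x ^ i) :
    c j * y ^ j / y ^ i ≤ (s.sup' hs fun n => c n * x ^ n) / x ^ i :=
  calc c j * y ^ j / y ^ i = c j * (y ^ j / y ^ i) := mul_div_assoc _ _ _
    _ ≤ c j * (x ^ j / x ^ i) := mul_le_mul_of_nonneg_left hxy hc
    _ = c j * x ^ j / x ^ i := (mul_div_assoc _ _ _).symm
    _ ≤ (s.sup' hs fun n => c n * x ^ n) / x ^ i :=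
      div_le_div_of_nonneg_right (Finset.le_sup' (fun n => c n * x ^ n) hj)
        (pow_nonneg hx.le _)

end PowDivPow

theorem maxtimes_lower_bounds_around_tropical_root_general
    (d t : ℕ) (p : ℕ → ℂ)
    (k : ℕ → ℕ) (hkt : k t = d)
    (hkmono : ∀ ℓ, ℓ < t → k ℓ < k (ℓ + 1))
    (hpk : ∀ ℓ, ℓ ≤ t → p (k ℓ) ≠ 0)
    (τ : ℕ → ℝ)
    (hτ : ∀ ℓ, 1 ≤ ℓ → ℓ ≤ t →
      τ ℓ = (‖p (k (ℓ - 1))‖ / ‖p (k ℓ)‖) ^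
            (1 / ((k ℓ - k (ℓ - 1) : ℕ) : ℝ)))
    (ℓ i : ℕ) (hℓ1 : 1 ≤ ℓ) (hℓt : ℓ ≤ t)
    (hi1 : k (ℓ - 1) ≤ i) (hi2 : i ≤ k ℓ) :
    (∀ x : ℝ, 0 < x → x ≤ τ ℓ →
      ‖p (k (ℓ - 1))‖ * τ ℓ ^ (k (ℓ - 1)) / τ ℓ ^ i ≤
      ((Finset.range (d + 1)).sup' Finset.nonempty_range_add_one
          fun j => ‖p j‖ * x ^ j) / x ^ i) ∧
    (∀ x : ℝ, τ ℓ ≤ x →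
      ‖p (k ℓ)‖ * τ ℓ ^ (k ℓ) / τ ℓ ^ i ≤
      ((Finset.range (d + 1)).sup' Finset.nonempty_range_add_one
          fun j => ‖p j‖ * x ^ j) / x ^ i) := by
  have hτpos : 0 < τ ℓ := by
    rw [hτ ℓ hℓ1 hℓt]
    exact Real.rpow_pos_of_pos (div_pos (norm_pos_iff.2 (hpk _ (by omega)))
      (norm_pos_iff.2 (hpk ℓ hℓt))) _
  have hkℓ : k ℓ ≤ d :=
    hkt ▸ (strictMonoOn_Iic_of_lt_succ hkmono).monotoneOn (Set.mem_Iic.2 hℓt)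
      (Set.mem_Iic.2 le_rfl) hℓt
  refine ⟨fun x hx hxτ => ?_, fun x hτx => ?_⟩
  · exact mul_pow_div_pow_le_sup'_div_pow _ (c := fun j => ‖p j‖)
      (Finset.mem_range.2 (by omega)) (norm_nonneg _) hx
      (pow_div_pow_le_pow_div_pow_of_le_of_le hx hxτ hi1)
  · exact mul_pow_div_pow_le_sup'_div_pow _ (c := fun j => ‖p j‖)
      (Finset.mem_range.2 (by omega)) (norm_nonneg _) (hτpos.trans_le hτx)
      (pow_div_pow_le_pow_div_pow_of_le_of_ge hτpos hτx hi2)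

/-- Let `1 ≤ ℓ ≤ t` and let `i` satisfy `k_{ℓ−1} ≤ i ≤ k_ℓ`. Then:
(i) for every `x` with `0 < x ≤ τ_ℓ`, `(max_{0≤j≤d} |p_j| x^j)/x^i ≥ |p_{k_{ℓ−1}}| τ_ℓ^{k_{ℓ−1}−i}`;
(ii) for every `x ≥ τ_ℓ`, `(max_{0≤j≤d} |p_j| x^j)/x^i ≥ |p_{k_ℓ}| τ_ℓ^{k_ℓ−i}`
(the possibly negative exponents are written with divisions). -/
theorem maxtimes_lower_bounds_around_tropical_root
    (d t : ℕ) (p : ℕ → ℂ) (hp0 : p 0 ≠ 0) (hpd : p d ≠ 0)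
    (k : ℕ → ℕ) (hk0 : k 0 = 0) (hkt : k t = d)
    (hkmono : ∀ ℓ, ℓ < t → k ℓ < k (ℓ + 1))
    (hpk : ∀ ℓ, ℓ ≤ t → p (k ℓ) ≠ 0)
    (τ : ℕ → ℝ)
    (hτ : ∀ ℓ, 1 ≤ ℓ → ℓ ≤ t →
      τ ℓ = (‖p (k (ℓ - 1))‖ / ‖p (k ℓ)‖) ^
            (1 / ((k ℓ - k (ℓ - 1) : ℕ) : ℝ)))
    (hτmono : ∀ ℓ, 1 ≤ ℓ → ℓ < t → τ ℓ < τ (ℓ + 1))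
    (hhull : ∀ ℓ, 1 ≤ ℓ → ℓ ≤ t → ∀ j, k (ℓ - 1) ≤ j → j ≤ k ℓ →
      ‖p j‖ * τ ℓ ^ j ≤ ‖p (k ℓ)‖ * τ ℓ ^ (k ℓ))
    (ℓ i : ℕ) (hℓ1 : 1 ≤ ℓ) (hℓt : ℓ ≤ t)
    (hi1 : k (ℓ - 1) ≤ i) (hi2 : i ≤ k ℓ) :
    (∀ x : ℝ, 0 < x → x ≤ τ ℓ →
      ‖p (k (ℓ - 1))‖ * τ ℓ ^ (k (ℓ - 1)) / τ ℓ ^ i ≤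
      ((Finset.range (d + 1)).sup' Finset.nonempty_range_add_one
          fun j => ‖p j‖ * x ^ j) / x ^ i) ∧
    (∀ x : ℝ, τ ℓ ≤ x →
      ‖p (k ℓ)‖ * τ ℓ ^ (k ℓ) / τ ℓ ^ i ≤
      ((Finset.range (d + 1)).sup' Finset.nonempty_range_add_one
          fun j => ‖p j‖ * x ^ j) / x ^ i) :=
  maxtimes_lower_bounds_around_tropical_root_general d t p k hkt hkmono hpk τ hτ ℓ i hℓ1 hℓt hi1 hi2
end

section
/- Define γ_i = inf_{x>0} β_i(x), where β_i(x) = (max_{0≤j≤d} |p_j| x^j)/(|p_i| x^i) if p_i ≠ 0 and β_i(x) = (max_{0≤j≤d} |p_j| x^j)/x^i if p_i = 0. Then: (a) γ_{k_ℓ} = 1 for every vertex index k_ℓ, ℓ = 0,…,t; (b) γ_i ≥ 1 whenever p_i ≠ 0; and (c) γ_i > 0 for every i ∈ {0,…,d}. -/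
/-!
Write `A j = ‖p j‖`. For `x > 0` consecutive vertex terms satisfy
`A (k ℓ) x^(k ℓ) / (A (k (ℓ-1)) x^(k (ℓ-1))) = (x / τ ℓ)^(m ℓ)`, so for `τ ℓ ≤ x ≤ τ (ℓ+1)` the
vertex terms increase up to index `ℓ` and decrease after it. Rescaling the hull condition from
`τ` to `x` bounds every term of an edge by one of the two vertex terms of that edge. Hence
`max_j A j x^j = A (k ℓ) x^(k ℓ)` at such an `x`, which gives `γ (k ℓ) ≤ 1`; the lower bounds
come from `max_j A j x^j ≥ A i x^i` and `max_j A j x^j ≥ min (A 0) (A d) x^i`.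
-/

open Finset

theorem le_csInf_of_forall_pos {f : ℝ → ℝ} {L : ℝ} (h : ∀ x, 0 < x → L ≤ f x) :
    L ≤ sInf {y | ∃ x, 0 < x ∧ y = f x} :=
  le_csInf ⟨f 1, 1, one_pos, rfl⟩ (by rintro _ ⟨x, hx, rfl⟩; exact h x hx)

theorem csInf_le_of_forall_pos {f : ℝ → ℝ} {L : ℝ} (h : ∀ x, 0 < x → L ≤ f x) {x : ℝ}
    (hx : 0 < x) : sInf {y | ∃ x, 0 < x ∧ y = f x} ≤ f x :=
  csInf_le ⟨L, by rintro _ ⟨x, hx, rfl⟩; exact h x hx⟩ ⟨x, hx, rfl⟩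

noncomputable def maxTerm (d : ℕ) (A : ℕ → ℝ) (x : ℝ) : ℝ :=
  (range (d + 1)).sup' nonempty_range_add_one fun j => A j * x ^ j

section maxTerm

variable {d : ℕ} {A : ℕ → ℝ} {x : ℝ}

theorem le_maxTerm {j : ℕ} (hj : j ≤ d) : A j * x ^ j ≤ maxTerm d A x :=
  le_sup' (fun j => A j * x ^ j) (mem_range.2 (Nat.lt_succ_of_le hj))

theorem maxTerm_le {B : ℝ} (h : ∀ j ≤ d, A j * x ^ j ≤ B) : maxTerm d A x ≤ B :=
  sup'_le _ _ fun j hj => h j (Nat.lt_succ_iff.mp (mem_range.mp hj))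

theorem one_le_maxTerm_div {i : ℕ} (hi : i ≤ d) (hAi : 0 < A i) (hx : 0 < x) :
    1 ≤ maxTerm d A x / (A i * x ^ i) := by
  rw [le_div_iff₀ (by positivity), one_mul]
  exact le_maxTerm hi

theorem min_mul_pow_le_maxTerm (hA0 : 0 ≤ A 0) (hAd : 0 ≤ A d) (hx : 0 < x) {i : ℕ}
    (hi : i ≤ d) : min (A 0) (A d) * x ^ i ≤ maxTerm d A x := by
  rcases le_total x 1 with hx1 | hx1
  · calc min (A 0) (A d) * x ^ i ≤ A 0 * x ^ 0 :=
          mul_le_mul (min_le_left _ _) (pow_le_pow_of_le_one hx.le hx1 i.zero_le) (by positivity)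
            hA0
      _ ≤ maxTerm d A x := le_maxTerm d.zero_le
  · calc min (A 0) (A d) * x ^ i ≤ A d * x ^ d :=
          mul_le_mul (min_le_right _ _) (pow_le_pow_right₀ hx1 hi) (by positivity) hAd
      _ ≤ maxTerm d A x := le_maxTerm le_rfl

theorem min_div_le_maxTerm_div (hA0 : 0 ≤ A 0) (hAd : 0 ≤ A d) (hx : 0 < x) {i : ℕ}
    (hi : i ≤ d) {c : ℝ} (hc : 0 < c) :
    min (A 0) (A d) / c ≤ maxTerm d A x / (c * x ^ i) := by
  rw [← mul_div_mul_right _ c (pow_pos hx i).ne', mul_comm c]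
  exact div_le_div_of_nonneg_right (min_mul_pow_le_maxTerm hA0 hAd hx hi) (by positivity)

theorem one_le_sInf_maxTerm_div {i : ℕ} (hi : i ≤ d) (hAi : 0 < A i) :
    1 ≤ sInf {y | ∃ x, 0 < x ∧ y = maxTerm d A x / (A i * x ^ i)} :=
  le_csInf_of_forall_pos fun _ hx => one_le_maxTerm_div hi hAi hx

theorem sInf_maxTerm_div_eq_one {i : ℕ} (hi : i ≤ d) (hAi : 0 < A i) (hx : 0 < x)
    (hmax : maxTerm d A x = A i * x ^ i) :
    sInf {y | ∃ x, 0 < x ∧ y = maxTerm d A x / (A i * x ^ i)} = 1 := by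
  refine le_antisymm ?_ (one_le_sInf_maxTerm_div hi hAi)
  refine (csInf_le_of_forall_pos (fun _ hx => one_le_maxTerm_div hi hAi hx) hx).trans_eq ?_
  rw [hmax, div_self (by positivity)]

theorem sInf_maxTerm_div_pos (hA0 : 0 < A 0) (hAd : 0 < A d) {i : ℕ} (hi : i ≤ d) {c : ℝ}
    (hc : 0 < c) : 0 < sInf {y | ∃ x, 0 < x ∧ y = maxTerm d A x / (c * x ^ i)} :=
  (div_pos (lt_min hA0 hAd) hc).trans_le <| le_csInf_of_forall_pos fun _ hx =>
    min_div_le_maxTerm_div hA0.le hAd.le hx hi hc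

end maxTerm

theorem mul_pow_le_mul_pow_of_div_pow_le {a c r x : ℝ} {i j : ℕ} (hc : 0 ≤ c) (hr : 0 < r)
    (hx : 0 ≤ x) (h : c * r ^ j ≤ a * r ^ i) (hxr : (x / r) ^ j ≤ (x / r) ^ i) :
    c * x ^ j ≤ a * x ^ i := by
  have hscale : ∀ (b : ℝ) (m : ℕ), b * x ^ m = b * r ^ m * (x / r) ^ m := fun b m => by
    rw [div_pow]; field_simp
  rw [hscale c j, hscale a i]
  calc c * r ^ j * (x / r) ^ j ≤ a * r ^ i * (x / r) ^ j := by gcongr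
    _ ≤ a * r ^ i * (x / r) ^ i :=
      mul_le_mul_of_nonneg_left hxr ((by positivity : 0 ≤ c * r ^ j).trans h)

theorem mul_pow_le_mul_pow_of_le_root {a c r x : ℝ} {i j : ℕ} (hc : 0 ≤ c) (hr : 0 < r)
    (hx : 0 ≤ x) (hxr : x ≤ r) (hij : i ≤ j) (h : c * r ^ j ≤ a * r ^ i) :
    c * x ^ j ≤ a * x ^ i :=
  mul_pow_le_mul_pow_of_div_pow_le hc hr hx h <|
    pow_le_pow_of_le_one (by positivity) ((div_le_one hr).2 hxr) hij

theorem mul_pow_le_mul_pow_of_root_le {b c r x : ℝ} {j l : ℕ} (hc : 0 ≤ c) (hr : 0 < r)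
    (hrx : r ≤ x) (hjl : j ≤ l) (h : c * r ^ j ≤ b * r ^ l) : c * x ^ j ≤ b * x ^ l :=
  mul_pow_le_mul_pow_of_div_pow_le hc hr (hr.le.trans hrx) h <|
    pow_le_pow_right₀ ((one_le_div hr).2 hrx) hjl

theorem mul_pow_rpow_one_div_eq {a b : ℝ} (ha : 0 ≤ a) (hb : 0 < b) {i j : ℕ} (hij : i < j) :
    b * ((a / b) ^ (1 / ((j - i : ℕ) : ℝ))) ^ j =
      a * ((a / b) ^ (1 / ((j - i : ℕ) : ℝ))) ^ i := by
  set r := (a / b) ^ (1 / ((j - i : ℕ) : ℝ))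
  have hr : r ^ (j - i) = a / b := by
    simp only [r, one_div]
    exact Real.rpow_inv_natCast_pow (div_nonneg ha hb.le) (by omega)
  calc b * r ^ j = b * r ^ (j - i) * r ^ i := by
        rw [mul_assoc, ← pow_add, Nat.sub_add_cancel hij.le]
    _ = a * r ^ i := by rw [hr, mul_div_cancel₀ _ hb.ne']

theorem monotoneOn_Icc_of_le_succ {α : Type*} [Preorder α] {f : ℕ → α} {a b : ℕ}
    (h : ∀ n, a ≤ n → n < b → f n ≤ f (n + 1)) : MonotoneOn f (Set.Icc a b) :=
  monotoneOn_of_le_succ Set.ordConnected_Icc fun n _ hn hsn =>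
    h n hn.1 (by simp only [Order.succ_eq_add_one, Set.mem_Icc] at hsn; omega)

theorem le_of_unimodal {α : Type*} [Preorder α] {f : ℕ → α} {ℓ t : ℕ}
    (hup : ∀ n < ℓ, f n ≤ f (n + 1)) (hdown : ∀ n, ℓ ≤ n → n < t → f (n + 1) ≤ f n) {n : ℕ}
    (hn : n ≤ t) : f n ≤ f ℓ := by
  rcases le_total n ℓ with h | h
  · exact monotoneOn_Icc_of_le_succ (fun n _ hn => hup n hn) ⟨n.zero_le, h⟩ ⟨ℓ.zero_le, le_rfl⟩
      h
  · exact monotoneOn_Icc_of_le_succ (α := αᵒᵈ) hdown ⟨le_rfl, h.trans hn⟩ ⟨h, hn⟩ h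

theorem exists_le_le_succ_of_le {k : ℕ → ℕ} {j t : ℕ} (h0 : k 0 ≤ j) (ht : j ≤ k t)
    (htpos : 0 < t) : ∃ n < t, k n ≤ j ∧ j ≤ k (n + 1) := by
  induction t with
  | zero => exact absurd htpos (lt_irrefl 0)
  | succ t ih =>
    rcases Nat.eq_zero_or_pos t with rfl | ht'
    · exact ⟨0, one_pos, h0, ht⟩
    by_cases hjt : j ≤ k t
    · obtain ⟨n, hn, hkn⟩ := ih hjt ht'
      exact ⟨n, hn.trans t.lt_succ_self, hkn⟩
    · exact ⟨t, t.lt_succ_self, (not_le.1 hjt).le, ht⟩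

/-- For monotone `τ` this says `τ ℓ ≤ x ≤ τ (ℓ + 1)`, reading `τ 0 = 0` and `τ (t + 1) = ∞`. -/
def InCell (τ : ℕ → ℝ) (t ℓ : ℕ) (x : ℝ) : Prop :=
  ∀ n < t, (n < ℓ → τ (n + 1) ≤ x) ∧ (ℓ ≤ n → x ≤ τ (n + 1))

theorem exists_inCell {τ : ℕ → ℝ} {t ℓ : ℕ} (hmono : MonotoneOn τ (Set.Icc 1 t))
    (hpos : ∀ n < t, 0 < τ (n + 1)) (hℓ : ℓ ≤ t) : ∃ x, 0 < x ∧ InCell τ t ℓ x := by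
  rcases Nat.eq_zero_or_pos t with rfl | ht
  · exact ⟨1, one_pos, fun n hn => absurd hn n.not_lt_zero⟩
  have hmem : max ℓ 1 ∈ Set.Icc 1 t := ⟨le_max_right _ _, max_le hℓ ht⟩
  refine ⟨τ (max ℓ 1), ?_, fun n hn => ⟨fun hnℓ => ?_, fun hℓn => ?_⟩⟩
  · simpa [Nat.sub_add_cancel (le_max_right ℓ 1)] using hpos (max ℓ 1 - 1) (by omega)
  · exact hmono ⟨by omega, by omega⟩ hmem (by omega)
  · exact hmono hmem ⟨by omega, by omega⟩ (by omega)

section NewtonPolygon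

variable {d t ℓ : ℕ} {A : ℕ → ℝ} {k : ℕ → ℕ} {τ : ℕ → ℝ} {x : ℝ}

theorem apply_le_of_forall_le_succ (hk : ∀ n < t, k n ≤ k (n + 1)) (hℓ : ℓ ≤ t) : k ℓ ≤ k t :=
  monotoneOn_Icc_of_le_succ (fun n _ hn => hk n hn) ⟨ℓ.zero_le, hℓ⟩ ⟨t.zero_le, le_rfl⟩ hℓ

theorem vertex_le_of_inCell (hA : ∀ j, 0 ≤ A j) (hk : ∀ n < t, k n ≤ k (n + 1))
    (hτ : ∀ n < t, 0 < τ (n + 1))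
    (hedge : ∀ n < t, A (k (n + 1)) * τ (n + 1) ^ k (n + 1) = A (k n) * τ (n + 1) ^ k n)
    (hx : 0 ≤ x) (hcell : InCell τ t ℓ x) (hℓ : ℓ ≤ t) {n : ℕ} (hn : n ≤ t) :
    A (k n) * x ^ k n ≤ A (k ℓ) * x ^ k ℓ := by
  refine le_of_unimodal (f := fun n => A (k n) * x ^ k n) (fun n hnℓ => ?_)
    (fun n hℓn hnt => ?_) hn
  · have hnt : n < t := hnℓ.trans_le hℓ
    exact mul_pow_le_mul_pow_of_root_le (hA _) (hτ n hnt) ((hcell n hnt).1 hnℓ)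
      (hk n hnt) (hedge n hnt).ge
  · exact mul_pow_le_mul_pow_of_le_root (hA _) (hτ n hnt) hx ((hcell n hnt).2 hℓn)
      (hk n hnt) (hedge n hnt).le

theorem maxTerm_eq_of_inCell (hA : ∀ j, 0 ≤ A j) (hk0 : k 0 = 0) (hkt : k t = d)
    (hk : ∀ n < t, k n ≤ k (n + 1)) (hτ : ∀ n < t, 0 < τ (n + 1))
    (hedge : ∀ n < t, A (k (n + 1)) * τ (n + 1) ^ k (n + 1) = A (k n) * τ (n + 1) ^ k n)
    (hhull : ∀ n < t, ∀ j, k n ≤ j → j ≤ k (n + 1) →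
      A j * τ (n + 1) ^ j ≤ A (k (n + 1)) * τ (n + 1) ^ k (n + 1))
    (hx : 0 ≤ x) (hcell : InCell τ t ℓ x) (hℓ : ℓ ≤ t) :
    maxTerm d A x = A (k ℓ) * x ^ k ℓ := by
  have hvertex := fun {n} => vertex_le_of_inCell hA hk hτ hedge hx hcell hℓ (n := n)
  refine le_antisymm (maxTerm_le fun j hj => ?_) (le_maxTerm ?_)
  · rcases Nat.eq_zero_or_pos t with rfl | ht
    · obtain rfl : j = k 0 := by omega
      exact hvertex le_rfl
    obtain ⟨n, hnt, hkn, hkn'⟩ := exists_le_le_succ_of_le (hk0 ▸ j.zero_le) (hkt ▸ hj) ht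
    rcases lt_or_ge n ℓ with hnℓ | hℓn
    · exact (mul_pow_le_mul_pow_of_root_le (hA j) (hτ n hnt) ((hcell n hnt).1 hnℓ) hkn'
        (hhull n hnt j hkn hkn')).trans (hvertex hnt)
    · exact (mul_pow_le_mul_pow_of_le_root (hA j) (hτ n hnt) hx ((hcell n hnt).2 hℓn) hkn
        ((hhull n hnt j hkn hkn').trans (hedge n hnt).le)).trans (hvertex hnt.le)
  · exact hkt ▸ apply_le_of_forall_le_succ hk hℓ

end NewtonPolygon

open Classical in
/-- Define `γ_i = inf_{x>0} β_i(x)`, where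
`β_i(x) = (max_{0≤j≤d} |p_j| x^j)/(|p_i| x^i)` if `p_i ≠ 0` and
`β_i(x) = (max_{0≤j≤d} |p_j| x^j)/x^i` if `p_i = 0`. Then:
(a) `γ_{k_ℓ} = 1` for every vertex index `k_ℓ`, `ℓ = 0,…,t`;
(b) `γ_i ≥ 1` whenever `p_i ≠ 0`; and (c) `γ_i > 0` for every `i ∈ {0,…,d}`. -/
theorem gamma_properties
    (d t : ℕ) (p : ℕ → ℂ) (hp0 : p 0 ≠ 0) (hpd : p d ≠ 0)
    (k : ℕ → ℕ) (hk0 : k 0 = 0) (hkt : k t = d)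
    (hkmono : ∀ ℓ, ℓ < t → k ℓ < k (ℓ + 1))
    (hpk : ∀ ℓ, ℓ ≤ t → p (k ℓ) ≠ 0)
    (τ : ℕ → ℝ)
    (hτ : ∀ ℓ, 1 ≤ ℓ → ℓ ≤ t →
      τ ℓ = (‖p (k (ℓ - 1))‖ / ‖p (k ℓ)‖) ^
            (1 / ((k ℓ - k (ℓ - 1) : ℕ) : ℝ)))
    (hτmono : ∀ ℓ, 1 ≤ ℓ → ℓ < t → τ ℓ < τ (ℓ + 1))
    (hhull : ∀ ℓ, 1 ≤ ℓ → ℓ ≤ t → ∀ j, k (ℓ - 1) ≤ j → j ≤ k ℓ →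
      ‖p j‖ * τ ℓ ^ j ≤ ‖p (k ℓ)‖ * τ ℓ ^ (k ℓ))
    (γ : ℕ → ℝ)
    (hγ : ∀ i, γ i = sInf {y : ℝ | ∃ x : ℝ, 0 < x ∧
      y = ((Finset.range (d + 1)).sup' Finset.nonempty_range_add_one
            fun j => ‖p j‖ * x ^ j) /
          ((if p i = 0 then 1 else ‖p i‖) * x ^ i)}) :
    (∀ ℓ, ℓ ≤ t → γ (k ℓ) = 1) ∧
    (∀ i, i ≤ d → p i ≠ 0 → 1 ≤ γ i) ∧
    (∀ i, i ≤ d → 0 < γ i) := by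
  have hnorm : ∀ ℓ ≤ t, 0 < ‖p (k ℓ)‖ := fun ℓ hℓ => norm_pos_iff.2 (hpk ℓ hℓ)
  have hτpos : ∀ n < t, 0 < τ (n + 1) := fun n hn => by
    rw [hτ (n + 1) n.succ_pos hn]
    exact Real.rpow_pos_of_pos (div_pos (hnorm n hn.le) (hnorm _ hn)) _
  have hedge : ∀ n < t,
      ‖p (k (n + 1))‖ * τ (n + 1) ^ k (n + 1) = ‖p (k n)‖ * τ (n + 1) ^ k n := fun n hn => by
    rw [hτ (n + 1) n.succ_pos hn, Nat.add_sub_cancel]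
    exact mul_pow_rpow_one_div_eq (norm_nonneg _) (hnorm _ hn) (hkmono n hn)
  have hk : ∀ n < t, k n ≤ k (n + 1) := fun n hn => (hkmono n hn).le
  refine ⟨fun ℓ hℓ => ?_, fun i hi hpi => ?_, fun i hi => ?_⟩
  · obtain ⟨x, hx, hcell⟩ :=
      exists_inCell (monotoneOn_Icc_of_le_succ fun n h1 h2 => (hτmono n h1 h2).le) hτpos hℓ
    rw [hγ, if_neg (hpk ℓ hℓ)]
    exact sInf_maxTerm_div_eq_one (A := (‖p ·‖)) (hkt ▸ apply_le_of_forall_le_succ hk hℓ)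
      (hnorm ℓ hℓ) hx <| maxTerm_eq_of_inCell (fun j => norm_nonneg _) hk0 hkt hk hτpos hedge
        (fun n hn => by simpa using hhull (n + 1) n.succ_pos hn) hx.le hcell hℓ
  · rw [hγ, if_neg hpi]
    exact one_le_sInf_maxTerm_div (A := (‖p ·‖)) hi (norm_pos_iff.2 hpi)
  · rw [hγ]
    exact sInf_maxTerm_div_pos (A := (‖p ·‖)) (norm_pos_iff.2 hp0) (norm_pos_iff.2 hpd) hi
      (by split_ifs with h; exacts [one_pos, norm_pos_iff.2 h])
end
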